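/- arXiv:2104.13832 — 6 statements merged into one kernel-verified Lean document; each statement's English description precedes it below -/
import Mathlib

section
/- Let ρ > 0 and let n be a positive integer. If X and Y are independent real-valued random variables with X following the Exponential(ρ) distribution and Y following the Gamma(n, ρ) distribution, then Z = X/Y + 1 follows the Pareto(1, n) distribution. -/
/-!
Conditioning on `Y`, `P(X / Y ≤ s) = E[1 - exp(-ρ s Y)]`, and the Laplace transform of the
Gamma(n, ρ) law turns this into `1 - (ρ / (ρ + ρ s))^n = 1 - (1 + s)^(-n)`. At `s = t - 1` this is
the Pareto(1, n) distribution function `1 - t^(-n)`.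
-/

open MeasureTheory ProbabilityTheory Real Set

namespace ProbabilityTheory

instance sFinite_gammaMeasure (a r : ℝ) : SFinite (gammaMeasure a r) := by
  rw [gammaMeasure]; infer_instance

instance sFinite_expMeasure (r : ℝ) : SFinite (expMeasure r) := sFinite_gammaMeasure 1 r

lemma expMeasure_Iic_of_neg {r x : ℝ} (hx : x < 0) : expMeasure r (Iic x) = 0 := by
  refine measure_mono_null (Iic_subset_Iio.mpr hx) ?_
  rw [expMeasure, gammaMeasure, withDensity_apply _ measurableSet_Iio]
  exact lintegral_gammaPDF_of_nonpos le_rfl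

lemma expMeasure_Iic_of_nonneg {r x : ℝ} (hr : 0 < r) (hx : 0 ≤ x) :
    expMeasure r (Iic x) = 1 - ENNReal.ofReal (exp (-(r * x))) := by
  rw [expMeasure, gammaMeasure, withDensity_apply _ measurableSet_Iic]
  refine (lintegral_exponentialPDF_eq_antiDeriv hr x).trans ?_
  rw [if_pos hx, ENNReal.ofReal_sub _ (exp_pos _).le, ENNReal.ofReal_one]

lemma gammaMeasure_ae_pos {a r : ℝ} : ∀ᵐ y ∂gammaMeasure a r, 0 < y := by
  simp only [ae_iff, not_lt]
  rw [show {y : ℝ | y ≤ 0} = Iic 0 from rfl, gammaMeasure, withDensity_apply _ measurableSet_Iic,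
    ← setLIntegral_congr Iio_ae_eq_Iic]
  exact lintegral_gammaPDF_of_nonpos le_rfl

lemma gammaPDF_mul_exp_neg_mul {a r l : ℝ} (ha : 0 < a) (hr : 0 < r) (hrl : 0 < r + l) (y : ℝ) :
    gammaPDF a r y * ENNReal.ofReal (exp (-(l * y)))
      = ENNReal.ofReal ((r / (r + l)) ^ a) * gammaPDF a (r + l) y := by
  rcases lt_or_ge y 0 with hy | hy
  · rw [gammaPDF_of_neg hy, gammaPDF_of_neg hy, zero_mul, mul_zero]
  rw [gammaPDF_of_nonneg hy, gammaPDF_of_nonneg hy, ← ENNReal.ofReal_mul (by positivity),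
    ← ENNReal.ofReal_mul (by positivity), div_rpow hr.le hrl.le]
  have hexp : exp (-(r * y)) * exp (-(l * y)) = exp (-((r + l) * y)) := by
    rw [← exp_add]; ring_nf
  rw [mul_assoc, hexp]
  field_simp

lemma lintegral_exp_neg_mul_gammaMeasure {a r l : ℝ} (ha : 0 < a) (hr : 0 < r) (hrl : 0 < r + l) :
    ∫⁻ y, ENNReal.ofReal (exp (-(l * y))) ∂gammaMeasure a r
      = ENNReal.ofReal ((r / (r + l)) ^ a) := by
  rw [gammaMeasure, lintegral_withDensity_eq_lintegral_mul _ (f := gammaPDF a r)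
      (measurable_gammaPDFReal a r).ennreal_ofReal (by fun_prop)]
  simp only [Pi.mul_apply, gammaPDF_mul_exp_neg_mul ha hr hrl]
  rw [lintegral_const_mul _ (f := gammaPDF a (r + l))
      (measurable_gammaPDFReal a (r + l)).ennreal_ofReal,
    lintegral_gammaPDF_eq_one ha hrl, mul_one]

lemma prod_setOf_div_le {μ ν : Measure ℝ} [SFinite μ] [SFinite ν] (hν : ∀ᵐ y ∂ν, 0 < y)
    (s : ℝ) : μ.prod ν {p | p.1 / p.2 ≤ s} = ∫⁻ y, μ (Iic (s * y)) ∂ν := by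
  rw [Measure.prod_apply_symm (measurableSet_le (by fun_prop) measurable_const)]
  refine lintegral_congr_ae (hν.mono fun y hy ↦ congrArg μ (Set.ext fun x ↦ ?_))
  simp [div_le_iff₀ hy]

lemma expMeasure_prod_gammaMeasure_div_le_of_neg {ρ a s : ℝ} (hs : s < 0) :
    (expMeasure ρ).prod (gammaMeasure a ρ) {p | p.1 / p.2 ≤ s} = 0 := by
  rw [prod_setOf_div_le gammaMeasure_ae_pos, lintegral_congr_ae (g := 0)
    (gammaMeasure_ae_pos.mono fun y hy ↦ expMeasure_Iic_of_neg (mul_neg_of_neg_of_pos hs hy)),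
    lintegral_zero_fun]

lemma expMeasure_prod_gammaMeasure_div_le {ρ a s : ℝ} (hρ : 0 < ρ) (ha : 0 < a) (hs : 0 ≤ s) :
    (expMeasure ρ).prod (gammaMeasure a ρ) {p | p.1 / p.2 ≤ s}
      = ENNReal.ofReal (1 - (1 + s) ^ (-a)) := by
  have := isProbabilityMeasure_gammaMeasure ha hρ
  have hρs : 0 < ρ + ρ * s := by positivity
  have hslice : ∀ᵐ y ∂gammaMeasure a ρ,
      expMeasure ρ (Iic (s * y)) = 1 - ENNReal.ofReal (exp (-(ρ * s * y))) :=
    gammaMeasure_ae_pos.mono fun y hy ↦ by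
      rw [expMeasure_Iic_of_nonneg hρ (by positivity), mul_assoc]
  have hle_one : (fun y ↦ ENNReal.ofReal (exp (-(ρ * s * y)))) ≤ᵐ[gammaMeasure a ρ] fun _ ↦ 1 :=
    gammaMeasure_ae_pos.mono fun y hy ↦ show _ ≤ 1 from ENNReal.ofReal_le_one.mpr <|
      exp_le_one_iff.mpr (neg_nonpos.mpr (by positivity))
  rw [prod_setOf_div_le gammaMeasure_ae_pos, lintegral_congr_ae hslice,
    lintegral_sub (by fun_prop)
      (lintegral_exp_neg_mul_gammaMeasure ha hρ hρs ▸ ENNReal.ofReal_ne_top) hle_one,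
    lintegral_one, measure_univ, lintegral_exp_neg_mul_gammaMeasure ha hρ hρs,
    ← ENNReal.ofReal_one, ← ENNReal.ofReal_sub _ (by positivity)]
  congr 2
  rw [show ρ / (ρ + ρ * s) = (1 + s)⁻¹ by field_simp, inv_rpow (by linarith),
    rpow_neg (by linarith)]

lemma paretoMeasure_Iic_of_lt {t r x : ℝ} (hx : x < t) : paretoMeasure t r (Iic x) = 0 := by
  refine measure_mono_null (Iic_subset_Iio.mpr hx) ?_
  rw [paretoMeasure, withDensity_apply _ measurableSet_Iio]
  exact lintegral_paretoPDF_of_le le_rfl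

lemma paretoMeasure_Iic_of_le {t r x : ℝ} (ht : 0 < t) (hr : 0 < r) (hx : t ≤ x) :
    paretoMeasure t r (Iic x) = ENNReal.ofReal (1 - (t / x) ^ r) := by
  have hx0 : 0 < x := ht.trans_le hx
  rw [paretoMeasure, withDensity_apply _ measurableSet_Iic,
    lintegral_Iic_eq_lintegral_Iio_add_Icc _ hx, lintegral_paretoPDF_of_le le_rfl, zero_add,
    setLIntegral_congr_fun measurableSet_Icc fun y hy ↦ paretoPDF_of_le hy.1]
  have hcont : ContinuousOn (fun y : ℝ ↦ r * t ^ r * y ^ (-(r + 1))) (Icc t x) :=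
    continuousOn_const.mul <| continuousOn_id.rpow_const fun y hy ↦ Or.inl (ht.trans_le hy.1).ne'
  rw [← ofReal_integral_eq_lintegral_ofReal (hcont.integrableOn_compact isCompact_Icc)
    (ae_restrict_of_forall_mem measurableSet_Icc fun y hy ↦ by
      have := ht.trans_le hy.1; positivity),
    integral_Icc_eq_integral_Ioc, ← intervalIntegral.integral_of_le hx,
    intervalIntegral.integral_const_mul, integral_rpow (Or.inr ⟨by linarith,
      notMem_uIcc_of_lt ht hx0⟩), show -(r + 1) + 1 = -r by ring,
    div_rpow ht.le hx0.le, rpow_neg ht.le, rpow_neg hx0.le]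
  congr 1
  field_simp
  ring

lemma map_div_add_one_expMeasure_prod_gammaMeasure {ρ a : ℝ} (hρ : 0 < ρ) (ha : 0 < a) :
    ((expMeasure ρ).prod (gammaMeasure a ρ)).map (fun p ↦ p.1 / p.2 + 1) = paretoMeasure 1 a := by
  have := isProbabilityMeasure_paretoMeasure one_pos ha
  refine (Measure.ext_of_Iic _ _ fun t ↦ ?_).symm
  rw [Measure.map_apply (by fun_prop) measurableSet_Iic,
    show (fun p : ℝ × ℝ ↦ p.1 / p.2 + 1) ⁻¹' Iic t = {p | p.1 / p.2 ≤ t - 1} by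
      ext; simp [le_sub_iff_add_le]]
  rcases lt_or_ge t 1 with ht | ht
  · rw [paretoMeasure_Iic_of_lt ht, expMeasure_prod_gammaMeasure_div_le_of_neg (by linarith)]
  · rw [paretoMeasure_Iic_of_le one_pos ha ht, expMeasure_prod_gammaMeasure_div_le hρ ha
      (by linarith), add_sub_cancel, one_div, inv_rpow (by linarith), rpow_neg (by linarith)]

end ProbabilityTheory

/-- If `X ~ Exponential(ρ)` and `Y ~ Gamma(n, ρ)` are independent (with `ρ > 0`, `n` a
positive integer), then `Z = X / Y + 1` follows the `Pareto(1, n)` distribution. -/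
theorem exponential_div_gamma_add_one_pareto
    {Ω : Type*} [MeasurableSpace Ω] (P : Measure Ω) [IsProbabilityMeasure P]
    (ρ : ℝ) (hρ : 0 < ρ) (n : ℕ) (hn : 0 < n) (X Y : Ω → ℝ)
    (hXmeas : Measurable X) (hYmeas : Measurable Y)
    (hX : Measure.map X P = expMeasure ρ)
    (hY : Measure.map Y P = gammaMeasure n ρ)
    (hindep : IndepFun X Y P) :
    Measure.map (fun ω => X ω / Y ω + 1) P = paretoMeasure 1 n := by
  have hjoint : P.map (fun ω ↦ (X ω, Y ω)) = (expMeasure ρ).prod (gammaMeasure n ρ) := by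
    rw [← hX, ← hY]
    exact (indepFun_iff_map_prod_eq_prod_map_map hXmeas.aemeasurable hYmeas.aemeasurable).mp hindep
  rw [← map_div_add_one_expMeasure_prod_gammaMeasure hρ (Nat.cast_pos.mpr hn), ← hjoint,
    Measure.map_map (by fun_prop) (hXmeas.prodMk hYmeas)]
  rfl
end

section
/- (Theorem 1, TWO-NN, probabilistic core.) Let d > 0 and ρ > 0 be real numbers and ω > 0. Let v₁ and v₂ be independent random variables, each following the Exponential(ρ) distribution, and define the nearest-neighbor distances r₁ = (v₁/ω)^{1/d} and r₂ = ((v₁+v₂)/ω)^{1/d}. Then the ratio μ = r₂/r₁ = (v₂/v₁ + 1)^{1/d} follows the Pareto(1, d) distribution. -/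
/-!
Conditioning on `v₁`, the Laplace transform of the exponential law gives
`P(v₂ ≥ t v₁) = E[exp(-ρ t v₁)] = 1 / (1 + t)`. Since `(v₂ / v₁ + 1) ^ (1 / d) ≥ x` iff
`v₂ ≥ (x ^ d - 1) v₁`, the ratio has survival function `x ^ (-d)` on `[1, ∞)`, which is that of
`Pareto(1, d)`. Finally `r₂ / r₁ = (v₂ / v₁ + 1) ^ (1 / d)` wherever `v₁, v₂ > 0`, that is,
almost surely.
-/

open MeasureTheory ProbabilityTheory Real Set

lemma lintegral_Ioi_exp_neg_mul {b : ℝ} (hb : 0 < b) (c : ℝ) :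
    ∫⁻ x in Ioi c, ENNReal.ofReal (exp (-(b * x))) = ENNReal.ofReal (exp (-(b * c)) / b) := by
  simp_rw [← neg_mul]
  rw [← ofReal_integral_eq_lintegral_ofReal (integrableOn_exp_mul_Ioi (by linarith) c)
      (ae_of_all _ fun x => (exp_pos _).le), integral_exp_mul_Ioi (by linarith), div_neg, neg_div,
    neg_neg]

lemma measure_Ici_eq_one_of_le {α : Type*} [MeasurableSpace α] [Preorder α] {μ : Measure α}
    [IsProbabilityMeasure μ] {a x : α} (ha : μ (Ici a) = 1) (hx : x ≤ a) : μ (Ici x) = 1 :=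
  le_antisymm prob_le_one (ha ▸ measure_mono (Ici_subset_Ici.2 hx))

namespace ProbabilityTheory

lemma expMeasure_eq_withDensity (ρ : ℝ) : expMeasure ρ = volume.withDensity (exponentialPDF ρ) :=
  rfl

lemma expMeasure_Iic_zero (ρ : ℝ) : expMeasure ρ (Iic 0) = 0 := by
  rw [expMeasure_eq_withDensity, withDensity_apply _ measurableSet_Iic,
    ← setLIntegral_congr Iio_ae_eq_Iic, lintegral_exponentialPDF_of_nonpos le_rfl]

lemma ae_pos_expMeasure (ρ : ℝ) : ∀ᵐ x ∂expMeasure ρ, 0 < x := by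
  simpa [ae_iff, ← Iic_def] using expMeasure_Iic_zero ρ

lemma expMeasure_Ici {ρ y : ℝ} (hρ : 0 < ρ) (hy : 0 ≤ y) :
    expMeasure ρ (Ici y) = ENNReal.ofReal (exp (-(ρ * y))) := by
  rw [expMeasure_eq_withDensity, withDensity_apply _ measurableSet_Ici,
    ← setLIntegral_congr Ioi_ae_eq_Ici,
    setLIntegral_congr_fun measurableSet_Ioi fun x (hx : y < x) => by
      rw [exponentialPDF_of_nonneg (hy.trans hx.le), ENNReal.ofReal_mul hρ.le],
    lintegral_const_mul _ (by fun_prop), lintegral_Ioi_exp_neg_mul hρ, ← ENNReal.ofReal_mul hρ.le,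
    mul_div_cancel₀ _ hρ.ne']

lemma lintegral_exp_neg_mul_expMeasure {ρ s : ℝ} (hρ : 0 < ρ) (hs : 0 < ρ + s) :
    ∫⁻ x, ENNReal.ofReal (exp (-(s * x))) ∂expMeasure ρ = ENNReal.ofReal (ρ / (ρ + s)) := by
  have hIoi : (expMeasure ρ).restrict (Ioi 0) = expMeasure ρ :=
    Measure.restrict_eq_self_of_ae_mem (ae_pos_expMeasure ρ)
  rw [← hIoi, expMeasure_eq_withDensity,
    setLIntegral_withDensity_eq_setLIntegral_mul (f := exponentialPDF ρ) _
      (measurable_exponentialPDFReal ρ).ennreal_ofReal (by fun_prop) measurableSet_Ioi,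
    setLIntegral_congr_fun measurableSet_Ioi fun x (hx : 0 < x) => by
      rw [Pi.mul_apply, exponentialPDF_of_nonneg hx.le, ENNReal.ofReal_mul hρ.le, mul_assoc,
        ← ENNReal.ofReal_mul (exp_pos _).le, ← exp_add, ← neg_add, ← add_mul],
    lintegral_const_mul _ (by fun_prop), lintegral_Ioi_exp_neg_mul hs, ← ENNReal.ofReal_mul hρ.le,
    mul_zero, neg_zero, exp_zero, mul_one_div]

lemma paretoMeasure_Ici {t r x : ℝ} (ht : 0 < t) (hr : 0 < r) (hx : t ≤ x) :
    paretoMeasure t r (Ici x) = ENNReal.ofReal ((t / x) ^ r) := by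
  have hx₀ : 0 < x := ht.trans_le hx
  have hexp : -(r + 1) < -1 := by linarith
  rw [paretoMeasure, withDensity_apply _ measurableSet_Ici, ← setLIntegral_congr Ioi_ae_eq_Ici,
    setLIntegral_congr_fun measurableSet_Ioi fun y (hy : x < y) => paretoPDF_of_le (hx.trans hy.le),
    ← ofReal_integral_eq_lintegral_ofReal
      ((integrableOn_Ioi_rpow_of_lt hexp hx₀).const_mul _)
      ((ae_restrict_iff' measurableSet_Ioi).2 (ae_of_all _ fun y (hy : x < y) => by
        have : 0 < y := hx₀.trans hy
        positivity)),
    integral_const_mul, integral_Ioi_rpow_of_lt hexp hx₀, div_rpow ht.le hx₀.le,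
    show -(r + 1) + 1 = -r by ring, rpow_neg hx₀.le]
  congr 1
  field_simp

lemma expMeasure_prod_mul_fst_le_snd {ρ t : ℝ} (hρ : 0 < ρ) (ht : 0 ≤ t) :
    (expMeasure ρ).prod (expMeasure ρ) {p | t * p.1 ≤ p.2} = ENNReal.ofReal (1 + t)⁻¹ := by
  have := isProbabilityMeasure_expMeasure hρ
  rw [Measure.prod_apply (measurableSet_le (by fun_prop) (by fun_prop))]
  calc ∫⁻ a, expMeasure ρ (Prod.mk a ⁻¹' {p | t * p.1 ≤ p.2}) ∂expMeasure ρ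
      = ∫⁻ a, ENNReal.ofReal (exp (-(ρ * t * a))) ∂expMeasure ρ := by
        refine lintegral_congr_ae ?_
        filter_upwards [ae_pos_expMeasure ρ] with a ha
        rw [mul_assoc, ← expMeasure_Ici hρ (by positivity)]
        rfl
    _ = ENNReal.ofReal (1 + t)⁻¹ := by
        rw [lintegral_exp_neg_mul_expMeasure hρ (by positivity)]
        congr 1
        field_simp

theorem map_rpow_div_add_one_expMeasure_prod {ρ d : ℝ} (hρ : 0 < ρ) (hd : 0 < d) :
    ((expMeasure ρ).prod (expMeasure ρ)).map (fun p => (p.2 / p.1 + 1) ^ (1 / d)) =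
      paretoMeasure 1 d := by
  have := isProbabilityMeasure_expMeasure hρ
  have := isProbabilityMeasure_paretoMeasure one_pos hd
  have hmeas : Measurable fun p : ℝ × ℝ => (p.2 / p.1 + 1) ^ (1 / d) := by fun_prop
  set μ := ((expMeasure ρ).prod (expMeasure ρ)).map (fun p => (p.2 / p.1 + 1) ^ (1 / d))
  have : IsProbabilityMeasure μ := Measure.isProbabilityMeasure_map hmeas.aemeasurable
  have hpos : ∀ᵐ p ∂(expMeasure ρ).prod (expMeasure ρ), 0 < p.1 ∧ 0 < p.2 :=
    (Measure.quasiMeasurePreserving_fst.ae (ae_pos_expMeasure ρ)).and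
      (Measure.quasiMeasurePreserving_snd.ae (ae_pos_expMeasure ρ))
  have hμ : ∀ x, 1 ≤ x → μ (Ici x) = ENNReal.ofReal ((1 / x) ^ d) := by
    intro x hx
    have hx₀ : 0 < x := one_pos.trans_le hx
    have hset : (fun p : ℝ × ℝ => (p.2 / p.1 + 1) ^ (1 / d)) ⁻¹' Ici x
        =ᵐ[(expMeasure ρ).prod (expMeasure ρ)] {p | (x ^ d - 1) * p.1 ≤ p.2} := by
      filter_upwards [hpos] with p ⟨h₁, h₂⟩
      change (x ≤ (p.2 / p.1 + 1) ^ (1 / d)) = ((x ^ d - 1) * p.1 ≤ p.2)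
      rw [one_div, le_rpow_inv_iff_of_pos hx₀.le (by positivity) hd, ← sub_le_iff_le_add,
        le_div_iff₀ h₁]
    rw [Measure.map_apply hmeas measurableSet_Ici, measure_congr hset,
      expMeasure_prod_mul_fst_le_snd hρ (by linarith [one_le_rpow hx hd.le]), add_sub_cancel,
      div_rpow zero_le_one hx₀.le, one_rpow, one_div]
  refine Measure.ext_of_Ici _ _ fun x => ?_
  rcases le_total 1 x with hx | hx
  · rw [hμ x hx, paretoMeasure_Ici one_pos hd hx]
  · have h₁ : paretoMeasure 1 d (Ici 1) = 1 := by simp [paretoMeasure_Ici one_pos hd le_rfl]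
    rw [measure_Ici_eq_one_of_le (by simpa using hμ 1 le_rfl) hx,
      measure_Ici_eq_one_of_le h₁ hx]

end ProbabilityTheory

theorem twoNN_ratio_pareto_general
    {Ω : Type*} [MeasurableSpace Ω] (P : Measure Ω)
    (d ρ w : ℝ) (hd : 0 < d) (hρ : 0 < ρ) (hw : 0 < w)
    (v₁ v₂ : Ω → ℝ) (hv₁meas : Measurable v₁) (hv₂meas : Measurable v₂)
    (hv₁ : Measure.map v₁ P = expMeasure ρ)
    (hv₂ : Measure.map v₂ P = expMeasure ρ)
    (hindep : IndepFun v₁ v₂ P)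
    (r₁ r₂ : Ω → ℝ)
    (hr₁ : ∀ ω, r₁ ω = (v₁ ω / w) ^ (1 / d))
    (hr₂ : ∀ ω, r₂ ω = ((v₁ ω + v₂ ω) / w) ^ (1 / d)) :
    Measure.map (fun ω => r₂ ω / r₁ ω) P = paretoMeasure 1 d ∧
    Measure.map (fun ω => (v₂ ω / v₁ ω + 1) ^ (1 / d)) P = paretoMeasure 1 d := by
  have := isProbabilityMeasure_expMeasure hρ
  have hjoint : P.map (fun ω => (v₁ ω, v₂ ω)) = (expMeasure ρ).prod (expMeasure ρ) := by
    rw [(indepFun_iff_map_prod_eq_prod_map_map' hv₁meas.aemeasurable hv₂meas.aemeasurable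
      (hv₁ ▸ inferInstance) (hv₂ ▸ inferInstance)).1 hindep, hv₁, hv₂]
  have hratio : P.map (fun ω => (v₂ ω / v₁ ω + 1) ^ (1 / d)) = paretoMeasure 1 d := by
    rw [← map_rpow_div_add_one_expMeasure_prod hρ hd, ← hjoint,
      Measure.map_map (by fun_prop) (hv₁meas.prodMk hv₂meas)]
    rfl
  have hpos {v : Ω → ℝ} (hv : Measurable v) (hlaw : P.map v = expMeasure ρ) : ∀ᵐ ω ∂P, 0 < v ω :=
    ae_of_ae_map hv.aemeasurable (hlaw ▸ ae_pos_expMeasure ρ)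
  have hae : (fun ω => r₂ ω / r₁ ω) =ᵐ[P] fun ω => (v₂ ω / v₁ ω + 1) ^ (1 / d) := by
    filter_upwards [hpos hv₁meas hv₁, hpos hv₂meas hv₂] with ω h₁ h₂
    rw [hr₁, hr₂, ← div_rpow (by positivity) (by positivity)]
    congr 1
    field_simp
    ring
  exact ⟨(Measure.map_congr hae).trans hratio, hratio⟩

/-- **Theorem 1 (TWO-NN), probabilistic core.**
Let `d > 0`, `ρ > 0`, `w > 0` (the volume of the `d`-dimensional unit ball). If `v₁, v₂` are
independent `Exponential(ρ)` random variables and `r₁ = (v₁ / w) ^ (1/d)`,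
`r₂ = ((v₁ + v₂) / w) ^ (1/d)` are the first two nearest-neighbor distances, then the ratio
`μ = r₂ / r₁ = (v₂ / v₁ + 1) ^ (1/d)` follows the `Pareto(1, d)` distribution. -/
theorem twoNN_ratio_pareto
    {Ω : Type*} [MeasurableSpace Ω] (P : Measure Ω) [IsProbabilityMeasure P]
    (d ρ w : ℝ) (hd : 0 < d) (hρ : 0 < ρ) (hw : 0 < w)
    (v₁ v₂ : Ω → ℝ) (hv₁meas : Measurable v₁) (hv₂meas : Measurable v₂)
    (hv₁ : Measure.map v₁ P = expMeasure ρ)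
    (hv₂ : Measure.map v₂ P = expMeasure ρ)
    (hindep : IndepFun v₁ v₂ P)
    (r₁ r₂ : Ω → ℝ)
    (hr₁ : ∀ ω, r₁ ω = (v₁ ω / w) ^ (1 / d))
    (hr₂ : ∀ ω, r₂ ω = ((v₁ ω + v₂ ω) / w) ^ (1 / d)) :
    Measure.map (fun ω => r₂ ω / r₁ ω) P = paretoMeasure 1 d ∧
    Measure.map (fun ω => (v₂ ω / v₁ ω + 1) ^ (1 / d)) P = paretoMeasure 1 d :=
  twoNN_ratio_pareto_general P d ρ w hd hρ hw v₁ v₂ hv₁meas hv₂meas hv₁ hv₂ hindep r₁ r₂ hr₁ hr₂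
end

section
/- Let d > 0, ρ > 0, and let L ≥ 2 be an integer. Let v₁, …, v_L be i.i.d. random variables following the Exponential(ρ) distribution. For l = 2, …, L define γ_l = (1/d)·log(1 + v_l/(v₁ + ⋯ + v_{l-1})). Then the random variables γ₂, …, γ_L are jointly independent, and for each l the variable γ_l follows the Exponential((l−1)·d) distribution; that is, the joint density of (γ₂,…,γ_L) factorizes as ∏_{l=2}^{L} (l−1)·d·exp(−(l−1)·d·γ_l) on (0,∞)^{L-1}. -/
/-!
For i.i.d. `Exp(r)` variables `x₀, …, x_{n-1}` and constants `c_k ≥ 0`, the event that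
`x_k > c_k (x₀ + ⋯ + x_{k-1})` for every `k` has probability `∏_k (1 + c_k)^{-k}`. Conditionally
on the first `n - 1` coordinates the last constraint has probability `e^{-r c (x₀ + ⋯ + x_{n-2})}`,
and tilting `Exp(r)` by `e^{-s y}` gives `r / (r + s) • Exp(r + s)`; so the formula follows by
induction on `n` once a tilt `e^{-s (x₀ + ⋯ + x_{n-1})}` is carried along.

Since `γ_l > t ↔ v_l > (e^{d t} - 1)(v₁ + ⋯ + v_{l-1})` for `t ≥ 0`, the joint tail function
`P(γ_l > t_l ∀ l)` is `∏_l e^{-(l-1) d t_l}`, that of independent `Exp((l-1) d)` variables.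
-/

open MeasureTheory ProbabilityTheory Real Finset
open Set
open scoped ENNReal

lemma expMeasure_Ioi {r : ℝ} (hr : 0 < r) (a : ℝ) :
    expMeasure r (Ioi a) = ENNReal.ofReal (exp (-(r * max a 0))) := by
  have := isProbabilityMeasure_expMeasure hr
  rw [← compl_Iic, prob_compl_eq_one_sub measurableSet_Iic, ← ofReal_cdf, cdf_expMeasure_eq hr]
  rcases le_or_gt 0 a with ha | ha
  · rw [if_pos ha, max_eq_left ha, ← ENNReal.ofReal_one,
      ← ENNReal.ofReal_sub _ (sub_nonneg.2 (exp_le_one_iff.2 (by nlinarith))), sub_sub_cancel]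
  · rw [if_neg ha.not_ge, max_eq_right ha.le]
    simp

lemma ae_pos_expMeasure {r : ℝ} (hr : 0 < r) : ∀ᵐ y ∂expMeasure r, 0 < y := by
  have := isProbabilityMeasure_expMeasure hr
  have h : expMeasure r (Iic 0) = 0 := by rw [← ofReal_cdf, cdf_expMeasure_eq hr]; simp
  rw [ae_iff]
  exact measure_mono_null (fun y => not_lt.1) h

lemma withDensity_exp_neg_mul_expMeasure {r s : ℝ} (hr : 0 < r) (hs : 0 ≤ s) :
    (expMeasure r).withDensity (fun y => ENNReal.ofReal (exp (-(s * y))))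
      = ENNReal.ofReal (r / (r + s)) • expMeasure (r + s) := by
  have hpdf : ∀ r, Measurable (exponentialPDF r) :=
    fun r => (measurable_exponentialPDFReal r).ennreal_ofReal
  change (volume.withDensity (exponentialPDF r)).withDensity _
    = _ • volume.withDensity (exponentialPDF (r + s))
  rw [← withDensity_mul _ (hpdf r) (by fun_prop), ← withDensity_smul _ (hpdf _)]
  congr 1
  ext y
  simp only [Pi.mul_apply, Pi.smul_apply, smul_eq_mul, exponentialPDF_eq]
  split_ifs
  · rw [← ENNReal.ofReal_mul (by positivity), ← ENNReal.ofReal_mul (by positivity), mul_assoc,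
      ← exp_add, ← mul_assoc, div_mul_cancel₀ _ (add_pos_of_pos_of_nonneg hr hs).ne']
    ring_nf
  · simp

lemma setLIntegral_Ioi_exp_neg_mul_expMeasure {r s a : ℝ} (hr : 0 < r) (hs : 0 ≤ s) (ha : 0 ≤ a) :
    ∫⁻ y in Ioi a, ENNReal.ofReal (exp (-(s * y))) ∂expMeasure r
      = ENNReal.ofReal (r / (r + s) * exp (-((r + s) * a))) := by
  rw [← withDensity_apply _ measurableSet_Ioi, withDensity_exp_neg_mul_expMeasure hr hs,
    Measure.smul_apply, expMeasure_Ioi (by positivity), max_eq_left ha, smul_eq_mul,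
    ENNReal.ofReal_mul (by positivity)]

lemma ae_pos_pi_expMeasure {ι : Type*} [Fintype ι] {r : ℝ} (hr : 0 < r) :
    ∀ᵐ x ∂Measure.pi (fun _ : ι => expMeasure r), ∀ i, 0 < x i := by
  have := isProbabilityMeasure_expMeasure hr
  exact ae_all_iff.2 fun i => Measure.tendsto_eval_ae_ae.eventually (ae_pos_expMeasure hr)

lemma lintegral_pi_fin_snoc {α : Type*} [MeasurableSpace α] (μ : Measure α) [SigmaFinite μ]
    {n : ℕ} {f : (Fin (n + 1) → α) → ℝ≥0∞} (hf : Measurable f) :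
    ∫⁻ x, f x ∂Measure.pi (fun _ => μ)
      = ∫⁻ z, ∫⁻ y, f (Fin.snoc z y) ∂μ ∂Measure.pi (fun _ => μ) := by
  have he := (measurePreserving_piFinSuccAbove (fun _ : Fin (n + 1) => μ) (Fin.last n)).symm
  rw [← he.lintegral_comp hf]
  refine (lintegral_prod_symm _ (hf.comp he.measurable).aemeasurable).trans ?_
  simp [MeasurableEquiv.piFinSuccAbove_symm_apply, Fin.snocEquiv]

lemma MeasureTheory.Measure.pi_eq_of_forall_Ioi {ι : Type*} [Fintype ι] {μ : ι → Measure ℝ}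
    [∀ i, IsFiniteMeasure (μ i)] {ν : Measure (ι → ℝ)}
    (h : ∀ t : ι → ℝ, ν (Set.univ.pi fun i => Ioi (t i)) = ∏ i, μ i (Ioi (t i))) :
    Measure.pi μ = ν := by
  refine Measure.pi_eq_generateFrom (C := fun _ => Set.range Ioi)
    (fun _ => (borel_eq_generateFrom_Ioi ℝ).symm) (fun _ => isPiSystem_Ioi)
    (fun i => ⟨fun n : ℕ => Ioi (-n), fun n => ⟨_, rfl⟩, fun n => measure_lt_top _ _, ?_⟩) ?_
  · refine eq_univ_of_forall fun x => mem_iUnion.2 ?_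
    obtain ⟨n, hn⟩ := exists_nat_gt (-x)
    exact ⟨n, neg_lt.1 hn⟩
  · intro s hs
    choose t ht using hs
    obtain rfl : s = fun i => Ioi (t i) := funext fun i => (ht i).symm
    exact h t

section JointLaw

variable {Ω ι : Type*} [MeasurableSpace Ω] {P : Measure Ω} [Fintype ι] {β : ι → Type*}
  [∀ i, MeasurableSpace (β i)] {X : ∀ i, Ω → β i} {μ : ∀ i, Measure (β i)}
  [∀ i, IsProbabilityMeasure (μ i)]

lemma map_eq_of_map_fun_eq_pi (hX : Measurable fun ω i => X i ω)
    (h : P.map (fun ω i => X i ω) = Measure.pi μ) (i : ι) : P.map (X i) = μ i := by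
  rw [← (measurePreserving_eval μ i).map_eq, ← h, Measure.map_map (measurable_pi_apply i) hX]
  rfl

lemma iIndepFun_of_map_fun_eq_pi [IsProbabilityMeasure P] (hX : Measurable fun ω i => X i ω)
    (h : P.map (fun ω i => X i ω) = Measure.pi μ) : iIndepFun X P := by
  rw [iIndepFun_iff_map_fun_eq_pi_map fun i => (measurable_pi_iff.1 hX i).aemeasurable, h]
  simp_rw [map_eq_of_map_fun_eq_pi hX h]

end JointLaw

def partialSum {n : ℕ} (x : Fin n → ℝ) (m : ℕ) : ℝ :=
  ∑ k ∈ univ.filter (fun k : Fin n => (k : ℕ) < m), x k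

lemma partialSum_zero {n : ℕ} (x : Fin n → ℝ) : partialSum x 0 = 0 := by
  simp [partialSum]

lemma partialSum_self {n : ℕ} (x : Fin n → ℝ) : partialSum x n = ∑ k, x k := by
  simp [partialSum]

lemma partialSum_snoc {n m : ℕ} (z : Fin n → ℝ) (y : ℝ) (hm : m ≤ n) :
    partialSum (Fin.snoc z y : Fin (n + 1) → ℝ) m = partialSum z m := by
  simp [partialSum, Finset.sum_filter, Fin.sum_univ_castSucc, hm.not_gt]

lemma partialSum_pos {n m : ℕ} {x : Fin n → ℝ} (hx : ∀ k, 0 < x k) (hm : 0 < m) (hn : 0 < n) :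
    0 < partialSum x m :=
  sum_pos (fun k _ => hx k) ⟨⟨0, hn⟩, by simpa using hm⟩

lemma measurable_partialSum {n : ℕ} (m : ℕ) : Measurable fun x : Fin n → ℝ => partialSum x m :=
  Finset.measurable_sum _ fun k _ => measurable_pi_apply k

def ratioCone {n : ℕ} (c : Fin n → ℝ) : Set (Fin n → ℝ) :=
  {x | ∀ k, c k * partialSum x k < x k}

lemma measurableSet_ratioCone {n : ℕ} (c : Fin n → ℝ) : MeasurableSet (ratioCone c) := by
  simp only [ratioCone, ofPred_forall]
  exact .iInter fun k => measurableSet_lt ((measurable_partialSum k).const_mul _)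
    (measurable_pi_apply k)

lemma snoc_mem_ratioCone_iff {n : ℕ} (c : Fin (n + 1) → ℝ) (z : Fin n → ℝ) (y : ℝ) :
    Fin.snoc z y ∈ ratioCone c ↔
      z ∈ ratioCone (fun k => c k.castSucc) ∧ c (Fin.last n) * ∑ k, z k < y := by
  simp [ratioCone, Fin.forall_fin_succ', partialSum_snoc, partialSum_self, Nat.le_of_lt]

lemma lintegral_indicator_ratioCone_snoc {n : ℕ} {r s : ℝ} (hr : 0 < r) (hs : 0 ≤ s)
    {c : Fin (n + 1) → ℝ} (hc : 0 ≤ c (Fin.last n)) {z : Fin n → ℝ} (hz : 0 ≤ ∑ k, z k) :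
    ∫⁻ y, (ratioCone c).indicator (fun x => ENNReal.ofReal (exp (-(s * ∑ k, x k))))
        (Fin.snoc z y) ∂expMeasure r
      = ENNReal.ofReal (r / (r + s)) * (ratioCone fun k => c k.castSucc).indicator
          (fun x => ENNReal.ofReal (exp (-((s + (r + s) * c (Fin.last n)) * ∑ k, x k)))) z := by
  by_cases hzc : z ∈ ratioCone fun k => c k.castSucc
  · have hslice : ∀ y, (ratioCone c).indicator (fun x => ENNReal.ofReal (exp (-(s * ∑ k, x k))))
          (Fin.snoc z y) = ENNReal.ofReal (exp (-(s * ∑ k, z k))) *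
            (Ioi (c (Fin.last n) * ∑ k, z k)).indicator
              (fun y => ENNReal.ofReal (exp (-(s * y)))) y := by
      intro y
      by_cases hy : c (Fin.last n) * ∑ k, z k < y
      · simp only [indicator, snoc_mem_ratioCone_iff, hzc, hy, true_and, Set.mem_Ioi, if_true,
          Fin.sum_univ_castSucc, Fin.snoc_castSucc, Fin.snoc_last]
        rw [← ENNReal.ofReal_mul (by positivity), ← exp_add]
        ring_nf
      · simp [indicator, snoc_mem_ratioCone_iff, hy]
    simp_rw [hslice]
    rw [lintegral_const_mul _ (Measurable.indicator (by fun_prop) measurableSet_Ioi),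
      lintegral_indicator measurableSet_Ioi,
      setLIntegral_Ioi_exp_neg_mul_expMeasure hr hs (mul_nonneg hc hz), indicator_of_mem hzc,
      ← ENNReal.ofReal_mul (by positivity), ← ENNReal.ofReal_mul (by positivity)]
    congr 1
    rw [mul_left_comm, ← exp_add]
    ring_nf
  · simp [indicator, snoc_mem_ratioCone_iff, hzc]

theorem lintegral_ratioCone_exp_neg_mul_sum {n : ℕ} {r s : ℝ} (hr : 0 < r) (hs : 0 ≤ s)
    (c : Fin n → ℝ) (hc : ∀ k, 0 ≤ c k) :
    ∫⁻ x in ratioCone c, ENNReal.ofReal (exp (-(s * ∑ k, x k))) ∂Measure.pi (fun _ => expMeasure r)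
      = ENNReal.ofReal ((r / (r + s)) ^ n * ∏ k, ((1 + c k)⁻¹) ^ (k : ℕ)) := by
  have := isProbabilityMeasure_expMeasure hr
  induction n generalizing s with
  | zero => simp [ratioCone]
  | succ n ih =>
    set a := c (Fin.last n)
    have hmeas : Measurable ((ratioCone c).indicator
        fun x : Fin (n + 1) → ℝ => ENNReal.ofReal (exp (-(s * ∑ k, x k)))) :=
      (by fun_prop : Measurable _).indicator (measurableSet_ratioCone c)
    rw [← lintegral_indicator (measurableSet_ratioCone c), lintegral_pi_fin_snoc _ hmeas,
      lintegral_congr_ae ((ae_pos_pi_expMeasure hr).mono fun z hz =>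
        lintegral_indicator_ratioCone_snoc hr hs (hc _) (sum_nonneg fun k _ => (hz k).le)),
      lintegral_const_mul _ ((by fun_prop : Measurable _).indicator (measurableSet_ratioCone _)),
      lintegral_indicator (measurableSet_ratioCone _),
      ih (by have := hc (Fin.last n); positivity) _ fun k => hc _,
      ← ENNReal.ofReal_mul (by positivity), Fin.prod_univ_castSucc]
    congr 1
    have hrs : r + (s + (r + s) * a) = (r + s) * (1 + a) := by ring
    rw [hrs, div_mul_eq_div_div, div_eq_mul_inv _ (1 + a)]
    simp only [Fin.val_castSucc, Fin.val_last]
    ring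

lemma pi_expMeasure_ratioCone {n : ℕ} {r : ℝ} (hr : 0 < r) (c : Fin n → ℝ) (hc : ∀ k, 0 ≤ c k) :
    Measure.pi (fun _ => expMeasure r) (ratioCone c)
      = ENNReal.ofReal (∏ k, ((1 + c k)⁻¹) ^ (k : ℕ)) := by
  simpa [hr.ne'] using lintegral_ratioCone_exp_neg_mul_sum hr le_rfl c hc

lemma lt_one_div_mul_log_one_add_div_iff {d T u τ : ℝ} (hd : 0 < d) (hT : 0 < T) (hu : 0 < u) :
    τ < 1 / d * log (1 + u / T) ↔ (exp (d * max τ 0) - 1) * T < u := by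
  rcases le_or_gt τ 0 with hτ | hτ
  · simp only [max_eq_right hτ, mul_zero, exp_zero, sub_self, zero_mul, hu, iff_true]
    exact hτ.trans_lt (mul_pos (by positivity) (log_pos (by simp [hu, hT])))
  · rw [max_eq_left hτ.le, one_div_mul_eq_div, lt_div_iff₀' hd, lt_log_iff_exp_lt (by positivity),
      ← sub_lt_iff_lt_add', lt_div_iff₀ hT]

lemma prod_Icc_two_eq_prod_fin {M : Type*} [CommMonoid M] (L : ℕ) (f : ℕ → M) (hf : f 1 = 1) :
    ∏ i : Set.Icc 2 L, f i = ∏ k : Fin L, f (k + 1) := by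
  rw [Finset.prod_set_coe, Set.toFinset_Icc, Fin.prod_univ_eq_prod_range (fun k => f (k + 1)),
    range_eq_Ico, prod_Ico_add' f 0 L 1, zero_add]
  rcases Nat.eq_zero_or_pos L with rfl | hL
  · simp
  · rw [prod_eq_prod_Ico_succ_bot (by omega), hf, one_mul]
    rfl

lemma pred_cast_mul_pos {d : ℝ} (hd : 0 < d) {L : ℕ} (i : Set.Icc 2 L) :
    0 < (((i : ℕ) - 1 : ℕ) : ℝ) * d := by
  obtain ⟨hi, -⟩ := i.2
  have : 0 < (i : ℕ) - 1 := by omega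
  positivity

noncomputable def logRatios (d : ℝ) {L : ℕ} (x : Fin L → ℝ) (i : Set.Icc 2 L) : ℝ :=
  1 / d * log (1 + x ⟨i - 1, Nat.sub_one_lt_of_le (by have := i.2.1; omega) i.2.2⟩ /
    partialSum x (i - 1))

lemma logRatios_eq {d : ℝ} {L : ℕ} (x : Fin L → ℝ) {i : Set.Icc 2 L} {k : Fin L}
    (h : (i : ℕ) = k + 1) : logRatios d x i = 1 / d * log (1 + x k / partialSum x k) := by
  have hk : (⟨i - 1, Nat.sub_one_lt_of_le (by have := i.2.1; omega) i.2.2⟩ : Fin L) = k :=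
    Fin.ext (by simp [h])
  rw [logRatios, hk, h, Nat.add_sub_cancel]

lemma measurable_logRatios (d : ℝ) (L : ℕ) : Measurable (logRatios d (L := L)) := by
  refine measurable_pi_lambda _ fun i => ?_
  unfold logRatios
  exact (measurable_const.add
    ((measurable_pi_apply _).div (measurable_partialSum _))).log.const_mul _

/-- `t` is extended by `0` off `Icc 2 L`; at `k = 0` the cone constraint is just `0 < x 0`. -/
lemma forall_lt_logRatios_iff {d : ℝ} (hd : 0 < d) {L : ℕ} {x : Fin L → ℝ} (hx : ∀ k, 0 < x k)
    (t : Set.Icc 2 L → ℝ) :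
    (∀ i, t i < logRatios d x i) ↔
      x ∈ ratioCone fun k => exp (d * max (Function.extend Subtype.val t 0 (k + 1)) 0) - 1 := by
  constructor
  · intro h k
    rcases Nat.eq_zero_or_pos k with hk | hk
    · simpa [hk, partialSum_zero] using hx k
    · have hk' : (k : ℕ) + 1 ∈ Set.Icc 2 L := ⟨by omega, k.2⟩
      have := h ⟨k + 1, hk'⟩
      rwa [logRatios_eq x rfl, lt_one_div_mul_log_one_add_div_iff hd
        (partialSum_pos hx hk k.pos) (hx _),
        ← Subtype.val_injective.extend_apply t 0 ⟨k + 1, hk'⟩] at this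
  · intro h i
    obtain ⟨hi2, hiL⟩ := i.2
    set k : Fin L := ⟨i - 1, by omega⟩
    have hk : (i : ℕ) = k + 1 := by simp only [k]; omega
    have := h k
    rw [logRatios_eq x hk, lt_one_div_mul_log_one_add_div_iff hd
      (partialSum_pos hx (by simp only [k]; omega) (by omega)) (hx _)]
    simpa [← hk, Subtype.val_injective.extend_apply] using this

theorem map_logRatios_pi_expMeasure {d ρ : ℝ} (hd : 0 < d) (hρ : 0 < ρ) (L : ℕ) :
    (Measure.pi fun _ : Fin L => expMeasure ρ).map (logRatios d)
      = Measure.pi fun i : Set.Icc 2 L => expMeasure (((i : ℕ) - 1 : ℕ) * d) := by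
  have := fun i : Set.Icc 2 L => isProbabilityMeasure_expMeasure (pred_cast_mul_pos hd i)
  refine (Measure.pi_eq_of_forall_Ioi fun t => ?_).symm
  set c : Fin L → ℝ := fun k => exp (d * max (Function.extend Subtype.val t 0 (k + 1)) 0) - 1
  have hc (k : Fin L) : 0 ≤ c k := sub_nonneg.2 (one_le_exp (by positivity))
  have hcone : logRatios d ⁻¹' Set.univ.pi (fun i => Ioi (t i))
      =ᵐ[Measure.pi fun _ => expMeasure ρ] ratioCone c := by
    rw [Filter.eventuallyEq_set]
    filter_upwards [ae_pos_pi_expMeasure hρ] with x hx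
    simpa [Set.mem_pi] using forall_lt_logRatios_iff hd hx t
  rw [Measure.map_apply (measurable_logRatios d L) (.univ_pi fun _ => measurableSet_Ioi),
    measure_congr hcone, pi_expMeasure_ratioCone hρ c hc]
  simp_rw [expMeasure_Ioi (pred_cast_mul_pos hd _)]
  rw [← ENNReal.ofReal_prod_of_nonneg (fun _ _ => (exp_pos _).le)]
  congr 1
  set f : ℕ → ℝ := fun m => exp (-((m - 1 : ℕ) * d * max (Function.extend Subtype.val t 0 m) 0))
  calc ∏ k, ((1 + c k)⁻¹) ^ (k : ℕ) = ∏ k : Fin L, f (k + 1) := by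
        refine prod_congr rfl fun k _ => ?_
        simp only [f, c, add_sub_cancel, add_tsub_cancel_right, ← exp_neg, ← exp_nat_mul]
        ring_nf
    _ = ∏ i : Set.Icc 2 L, f i := (prod_Icc_two_eq_prod_fin L f (by simp [f])).symm
    _ = _ := by simp [f]

/-- Let `d > 0`, `ρ > 0`, `L ≥ 2`, and let `v 0, …, v (L-1)` be i.i.d. `Exponential(ρ)`
random variables (`v (l-1)` being the `l`-th shell volume, `l = 1, …, L`). For
`2 ≤ l ≤ L` define `γ_l = (1/d)·log(1 + v_l / (v₁ + ⋯ + v_{l-1}))`. Then `γ₂, …, γ_L`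
are jointly independent and `γ_l ~ Exponential((l-1)·d)`; i.e. their joint density
factorizes as `∏_{l=2}^{L} (l-1)·d·exp(−(l-1)·d·γ_l)` on `(0,∞)^{L-1}`. -/
theorem cride_log_ratios_independent_exponential
    {Ω : Type*} [MeasurableSpace Ω] (P : Measure Ω) [IsProbabilityMeasure P]
    (d ρ : ℝ) (hd : 0 < d) (hρ : 0 < ρ) (L : ℕ) (hL : 2 ≤ L)
    (v : Fin L → Ω → ℝ) (hvmeas : ∀ k, Measurable (v k))
    (hindep : iIndepFun v P)
    (hlaw : ∀ k, Measure.map (v k) P = expMeasure ρ)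
    (S : ℕ → Ω → ℝ)
    (hS : ∀ l ω, S l ω = ∑ k ∈ Finset.univ.filter (fun k : Fin L => (k : ℕ) < l), v k ω)
    (γ : ℕ → Ω → ℝ)
    (hγ : ∀ l, 2 ≤ l → ∀ hl : l ≤ L, ∀ ω,
      γ l ω = (1 / d) * Real.log (1 + v ⟨l - 1, by omega⟩ ω / S (l - 1) ω)) :
    iIndepFun (fun l : Set.Icc 2 L => γ (l : ℕ)) P ∧
    ∀ l : ℕ, 2 ≤ l → l ≤ L →
      Measure.map (γ l) P = expMeasure ((l - 1 : ℕ) * d) := by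
  have := fun i : Set.Icc 2 L => isProbabilityMeasure_expMeasure (pred_cast_mul_pos hd i)
  have hv : Measurable fun ω k => v k ω := measurable_pi_lambda _ hvmeas
  have hγv : (fun ω (i : Set.Icc 2 L) => γ i ω) = logRatios d ∘ fun ω k => v k ω := by
    funext ω i
    obtain ⟨hi2, hiL⟩ := i.2
    rw [hγ i hi2 hiL, hS]
    rfl
  have hγmeas : Measurable fun ω (i : Set.Icc 2 L) => γ i ω :=
    hγv ▸ (measurable_logRatios d L).comp hv
  have hjoint : P.map (fun ω (i : Set.Icc 2 L) => γ i ω)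
      = Measure.pi fun i : Set.Icc 2 L => expMeasure (((i : ℕ) - 1 : ℕ) * d) := by
    rw [hγv, ← Measure.map_map (measurable_logRatios d L) hv,
      (iIndepFun_iff_map_fun_eq_pi_map fun k => (hvmeas k).aemeasurable).1 hindep]
    simp_rw [hlaw]
    exact map_logRatios_pi_expMeasure hd hρ L
  exact ⟨iIndepFun_of_map_fun_eq_pi hγmeas hjoint,
    fun l hl2 hlL => map_eq_of_map_fun_eq_pi hγmeas hjoint ⟨l, hl2, hlL⟩⟩
end

section
/- (Theorem 3, moments.) Let d > 0, let n₁ < n₂ be positive integers, and let μ̇ be a random variable whose law has density f(μ) = d·(μ^d − 1)^{n₂−n₁−1} / (μ^{(n₂−1)d+1} · B(n₂−n₁, n₁)) for μ > 1 and 0 otherwise. Then for every real k with k < d·n₁, the k-th moment of μ̇ is finite and equals E[μ̇^k] = B(n₂−n₁, n₁ − k/d) / B(n₂−n₁, n₁). -/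
open MeasureTheory ProbabilityTheory Real Set intervalIntegral

/-- The Beta function `B(a, b) = Γ(a)Γ(b)/Γ(a+b)`. -/
noncomputable def betaFn (a b : ℝ) : ℝ := Real.Gamma a * Real.Gamma b / Real.Gamma (a + b)

lemma betaFn_symm (a b : ℝ) : betaFn a b = betaFn b a := by
  unfold betaFn; rw [mul_comm, add_comm]

lemma betaFn_integral {a b : ℝ} (ha : 0 < a) (hb : 0 < b) :
    IntegrableOn (fun t : ℝ => t ^ (a - 1) * (1 - t) ^ (b - 1)) (Ioo 0 1) volume ∧
    ∫ t in Ioo (0:ℝ) 1, t ^ (a - 1) * (1 - t) ^ (b - 1) = betaFn a b := by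
  have heq : ∀ x ∈ Icc (0:ℝ) 1,
      ((x:ℂ) ^ ((a:ℂ) - 1) * (1 - (x:ℂ)) ^ ((b:ℂ) - 1))
        = ((x ^ (a - 1) * (1 - x) ^ (b - 1) : ℝ) : ℂ) := by
    intro x hx
    rw [Complex.ofReal_mul, Complex.ofReal_cpow hx.1, Complex.ofReal_cpow (by linarith [hx.2])]
    push_cast
    ring
  have hkey : Complex.betaIntegral a b
      = ((∫ t in (0:ℝ)..1, t ^ (a - 1) * (1 - t) ^ (b - 1) : ℝ) : ℂ) := by
    rw [← intervalIntegral.integral_ofReal]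
    apply intervalIntegral.integral_congr
    intro x hx
    rw [Set.uIcc_of_le zero_le_one] at hx
    exact heq x hx
  have hconv := Complex.betaIntegral_convergent (u := (a:ℂ)) (v := (b:ℂ))
    (by simpa using ha) (by simpa using hb)
  have hIoc : IntegrableOn (fun x : ℝ => (x:ℂ) ^ ((a:ℂ) - 1) * (1 - (x:ℂ)) ^ ((b:ℂ) - 1))
      (Ioc 0 1) volume := by
    rwa [intervalIntegrable_iff_integrableOn_Ioc_of_le zero_le_one] at hconv
  have hint : IntegrableOn (fun t : ℝ => t ^ (a - 1) * (1 - t) ^ (b - 1)) (Ioo 0 1) volume := by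
    refine MeasureTheory.IntegrableOn.congr_fun
      ((hIoc.mono_set Ioo_subset_Ioc_self).re) (fun x hx => ?_) measurableSet_Ioo
    rw [heq x ⟨hx.1.le, hx.2.le⟩]
    simp
  refine ⟨hint, ?_⟩
  have hG := Complex.Gamma_mul_Gamma_eq_betaIntegral
    (s := (a:ℂ)) (t := (b:ℂ)) (by simpa using ha) (by simpa using hb)
  rw [hkey] at hG
  have hcast : ((Real.Gamma a * Real.Gamma b : ℝ) : ℂ)
      = ((Real.Gamma (a + b) * ∫ t in (0:ℝ)..1, t ^ (a - 1) * (1 - t) ^ (b - 1) : ℝ) : ℂ) := by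
    push_cast
    rw [← Complex.Gamma_ofReal, ← Complex.Gamma_ofReal, ← Complex.Gamma_ofReal]
    push_cast at hG ⊢
    rw [hG]
  have hre : Real.Gamma a * Real.Gamma b
      = Real.Gamma (a + b) * ∫ t in (0:ℝ)..1, t ^ (a - 1) * (1 - t) ^ (b - 1) :=
    Complex.ofReal_injective hcast
  have hab : 0 < Real.Gamma (a + b) := Real.Gamma_pos_of_pos (by linarith)
  rw [intervalIntegral.integral_of_le zero_le_one, MeasureTheory.integral_Ioc_eq_integral_Ioo]
    at hre
  unfold betaFn
  rw [hre]
  field_simp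

lemma gride_integral (d : ℝ) (hd : 0 < d) (n₁ n₂ : ℕ) (hn₁ : 0 < n₁) (hn : n₁ < n₂)
    (k : ℝ) (hk : k < d * n₁) :
    IntegrableOn (fun μ : ℝ => μ ^ k *
        (d * (μ ^ d - 1) ^ (n₂ - n₁ - 1) / μ ^ (((n₂ : ℝ) - 1) * d + 1))) (Ioi 1) volume ∧
    ∫ μ in Ioi (1:ℝ), μ ^ k * (d * (μ ^ d - 1) ^ (n₂ - n₁ - 1) / μ ^ (((n₂ : ℝ) - 1) * d + 1))
      = betaFn ((n₂ - n₁ : ℕ) : ℝ) ((n₁ : ℝ) - k / d) := by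
  have hdne : d ≠ 0 := hd.ne'
  set m : ℕ := n₂ - n₁ with hm
  have hm1 : 1 ≤ m := by omega
  have hmr : (m : ℝ) = (n₂ : ℝ) - n₁ := by
    rw [hm, Nat.cast_sub hn.le]
  have hm1r : ((m - 1 : ℕ) : ℝ) = (m : ℝ) - 1 := by
    rw [Nat.cast_sub hm1]; norm_num
  have ha : 0 < (n₁ : ℝ) - k / d := by
    have : k / d < n₁ := (div_lt_iff₀ hd).mpr (by linarith [hk])
    linarith
  have hbr : (0:ℝ) < (m : ℝ) := by exact_mod_cast hm1
  set f : ℝ → ℝ := fun t => t ^ (-1/d) with hf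
  set f' : ℝ → ℝ := fun t => (-1/d) * t ^ (-1/d - 1) with hf'
  have hneg : -1/d < 0 := div_neg_of_neg_of_pos (by norm_num) hd
  have himg : f '' Ioo 0 1 = Ioi 1 := by
    ext μ
    constructor
    · rintro ⟨t, ⟨ht0, ht1⟩, rfl⟩
      exact (Real.one_lt_rpow_iff_of_pos ht0).mpr (Or.inr ⟨ht1, hneg⟩)
    · intro hμ
      have hμ0 : (0:ℝ) < μ := lt_trans one_pos hμ
      refine ⟨μ ^ (-d), ⟨Real.rpow_pos_of_pos hμ0 _,
        Real.rpow_lt_one_of_one_lt_of_neg hμ (by linarith)⟩, ?_⟩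
      show (μ ^ (-d)) ^ (-1/d) = μ
      rw [← Real.rpow_mul hμ0.le, show -d * (-1/d) = 1 by field_simp, Real.rpow_one]
  have hinj : Set.InjOn f (Ioo 0 1) := by
    intro t₁ h₁ t₂ h₂ he
    have h := congrArg (fun x : ℝ => x ^ (-d)) he
    simpa only [hf, ← Real.rpow_mul h₁.1.le, ← Real.rpow_mul h₂.1.le,
      show -1/d * -d = 1 by field_simp, Real.rpow_one] using h
  have hderiv : ∀ t ∈ Ioo (0:ℝ) 1, HasDerivWithinAt f (f' t) (Ioo 0 1) t := fun t ht =>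
    (Real.hasDerivAt_rpow_const (Or.inl ht.1.ne')).hasDerivWithinAt
  set g : ℝ → ℝ :=
    fun μ => μ ^ k * (d * (μ ^ d - 1) ^ (m - 1) / μ ^ (((n₂ : ℝ) - 1) * d + 1)) with hg
  have hpt : ∀ t ∈ Ioo (0:ℝ) 1, |f' t| • g (f t)
      = t ^ ((n₁ : ℝ) - k / d - 1) * (1 - t) ^ ((m : ℝ) - 1) := by
    intro t ht
    obtain ⟨ht0, ht1⟩ := ht
    have ht1' : (0:ℝ) < 1 - t := by linarith
    have e1 : (t ^ (-1/d)) ^ d = t⁻¹ := by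
      rw [← Real.rpow_mul ht0.le, show -1/d*d = (-1:ℝ) by field_simp, Real.rpow_neg_one]
    have e4 : t⁻¹ - 1 = (1 - t)/t := by field_simp
    have e5 : |(-1/d) * t ^ (-1/d - 1)| = 1/d * t ^ (-1/d - 1) := by
      rw [abs_mul, abs_of_pos (Real.rpow_pos_of_pos ht0 _)]
      congr 1
      rw [abs_div, abs_neg, abs_one, abs_of_pos hd]
    have collapse : t ^ (-1/d - 1) * t ^ (-1/d * k) / t ^ ((m:ℝ) - 1)
        / t ^ (-1/d * (((n₂:ℝ) - 1) * d + 1)) = t ^ ((n₁ : ℝ) - k / d - 1) := by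
      rw [← Real.rpow_add ht0, ← Real.rpow_sub ht0, ← Real.rpow_sub ht0]
      congr 1
      rw [hmr]
      field_simp
      ring
    show |f' t| * g (f t) = _
    rw [hf', hg, hf]
    simp only
    rw [e5, e1, e4, div_pow, ← Real.rpow_natCast t (m-1), ← Real.rpow_natCast (1-t) (m-1), hm1r,
      ← Real.rpow_mul ht0.le, ← Real.rpow_mul ht0.le, ← collapse]
    have hne₁ : t ^ ((m:ℝ) - 1) ≠ 0 := (Real.rpow_pos_of_pos ht0 _).ne'
    have hne₂ : t ^ (-1/d * (((n₂:ℝ) - 1) * d + 1)) ≠ 0 := (Real.rpow_pos_of_pos ht0 _).ne'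
    field_simp
  have hbeta := betaFn_integral ha hbr
  have hii := integrableOn_image_iff_integrableOn_abs_deriv_smul measurableSet_Ioo hderiv hinj g
  rw [himg] at hii
  have hvi := integral_image_eq_integral_abs_deriv_smul measurableSet_Ioo hderiv hinj g
  rw [himg] at hvi
  constructor
  · exact hii.mpr (hbeta.1.congr_fun (fun t ht => (hpt t ht).symm) measurableSet_Ioo)
  · rw [hvi, MeasureTheory.setIntegral_congr_fun measurableSet_Ioo hpt, hbeta.2, betaFn_symm]

/-- **Theorem 3 (moments of the Gride ratio).** Let `d > 0`, `n₁ < n₂` positive integers,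
and let `μ̇` be a random variable whose law has density
`μ ↦ d·(μ^d − 1)^{n₂−n₁−1} / (μ^{(n₂−1)d+1} · B(n₂−n₁, n₁))` for `μ > 1` and `0`
otherwise. Then for every real `k < d·n₁`, the `k`-th moment of `μ̇` is finite and
`E[μ̇^k] = B(n₂−n₁, n₁ − k/d) / B(n₂−n₁, n₁)`. -/
theorem gride_ratio_moments
    {Ω : Type*} [MeasurableSpace Ω] (P : Measure Ω) [IsProbabilityMeasure P]
    (d : ℝ) (hd : 0 < d) (n₁ n₂ : ℕ) (hn₁ : 0 < n₁) (hn : n₁ < n₂)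
    (X : Ω → ℝ) (hXmeas : Measurable X)
    (hlaw : Measure.map X P =
      volume.withDensity (fun μ => ENNReal.ofReal
        (if 1 < μ then
          d * (μ ^ d - 1) ^ (n₂ - n₁ - 1) /
            (μ ^ (((n₂ : ℝ) - 1) * d + 1) * betaFn (n₂ - n₁ : ℕ) n₁)
        else 0)))
    (k : ℝ) (hk : k < d * n₁) :
    Integrable (fun ω => X ω ^ k) P ∧
    ∫ ω, X ω ^ k ∂P = betaFn (n₂ - n₁ : ℕ) ((n₁ : ℝ) - k / d) / betaFn (n₂ - n₁ : ℕ) n₁ := by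
  have hB : 0 < betaFn ((n₂ - n₁ : ℕ) : ℝ) (n₁ : ℝ) := by
    have h1 : (0:ℝ) < ((n₂ - n₁ : ℕ) : ℝ) := by
      have : 0 < n₂ - n₁ := by omega
      exact_mod_cast this
    have h2 : (0:ℝ) < (n₁ : ℝ) := by exact_mod_cast hn₁
    exact div_pos (mul_pos (Real.Gamma_pos_of_pos h1) (Real.Gamma_pos_of_pos h2))
      (Real.Gamma_pos_of_pos (by linarith))
  set g₀ : ℝ → ℝ := fun μ =>
    if 1 < μ then
      d * (μ ^ d - 1) ^ (n₂ - n₁ - 1) /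
        (μ ^ (((n₂ : ℝ) - 1) * d + 1) * betaFn (n₂ - n₁ : ℕ) n₁)
    else 0 with hg₀
  have hg₀meas : Measurable g₀ := by
    apply Measurable.ite measurableSet_Ioi _ measurable_const
    fun_prop
  have hg₀nonneg : ∀ μ, 0 ≤ g₀ μ := by
    intro μ
    rw [hg₀]
    simp only
    split_ifs with hμ
    · have hμ0 : (0:ℝ) < μ := lt_trans one_pos hμ
      have h1 : (1:ℝ) ≤ μ ^ d := Real.one_le_rpow hμ.le hd.le
      apply div_nonneg
      · exact mul_nonneg hd.le (pow_nonneg (by linarith) _)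
      · exact mul_nonneg (Real.rpow_pos_of_pos hμ0 _).le hB.le
    · exact le_rfl
  have hlaw' : Measure.map X P = volume.withDensity (fun μ => ENNReal.ofReal (g₀ μ)) := hlaw
  have hμk_meas : Measurable fun μ : ℝ => μ ^ k := by fun_prop
  have hGI := gride_integral d hd n₁ n₂ hn₁ hn k hk
  have key_fun : (fun μ : ℝ => μ ^ k * g₀ μ) = Set.indicator (Ioi 1)
      (fun μ => μ ^ k * (d * (μ ^ d - 1) ^ (n₂ - n₁ - 1) / μ ^ (((n₂ : ℝ) - 1) * d + 1))
        / betaFn ((n₂ - n₁ : ℕ) : ℝ) (n₁ : ℝ)) := by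
    funext μ
    by_cases hμ : 1 < μ
    · rw [Set.indicator_of_mem (show μ ∈ Ioi 1 from hμ), hg₀]
      simp only [if_pos hμ]
      ring
    · rw [Set.indicator_of_notMem (show μ ∉ Ioi 1 from hμ), hg₀]
      simp only [if_neg hμ, mul_zero]
  have htoReal : (fun μ : ℝ => μ ^ k * (ENNReal.ofReal (g₀ μ)).toReal)
      = fun μ : ℝ => μ ^ k * g₀ μ := by
    funext μ
    rw [ENNReal.toReal_ofReal (hg₀nonneg μ)]
  have hintμ : Integrable (fun μ : ℝ => μ ^ k) (Measure.map X P) := by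
    rw [hlaw', integrable_withDensity_iff hg₀meas.ennreal_ofReal
      (ae_of_all _ fun μ => ENNReal.ofReal_lt_top)]
    rw [htoReal, key_fun, integrable_indicator_iff measurableSet_Ioi]
    exact hGI.1.div_const _
  constructor
  · exact (integrable_map_measure hμk_meas.aestronglyMeasurable hXmeas.aemeasurable).mp hintμ
  · calc ∫ ω, X ω ^ k ∂P = ∫ μ, μ ^ k ∂(Measure.map X P) :=
          (integral_map hXmeas.aemeasurable hμk_meas.aestronglyMeasurable).symm
      _ = ∫ μ, μ ^ k ∂(volume.withDensity fun μ => ENNReal.ofReal (g₀ μ)) := by rw [hlaw']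
      _ = ∫ μ, (Real.toNNReal (g₀ μ)) • μ ^ k := by
          rw [← integral_withDensity_eq_integral_smul hg₀meas.real_toNNReal (fun μ : ℝ => μ ^ k)]
          rfl
      _ = ∫ μ, μ ^ k * g₀ μ := by
          apply MeasureTheory.integral_congr_ae
          filter_upwards with μ
          rw [NNReal.smul_def, Real.coe_toNNReal _ (hg₀nonneg μ), smul_eq_mul, mul_comm]
      _ = ∫ μ in Ioi (1:ℝ), μ ^ k * (d * (μ ^ d - 1) ^ (n₂ - n₁ - 1)
            / μ ^ (((n₂ : ℝ) - 1) * d + 1)) / betaFn ((n₂ - n₁ : ℕ) : ℝ) (n₁ : ℝ) := by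
          rw [key_fun, MeasureTheory.integral_indicator measurableSet_Ioi]
      _ = (∫ μ in Ioi (1:ℝ), μ ^ k * (d * (μ ^ d - 1) ^ (n₂ - n₁ - 1)
            / μ ^ (((n₂ : ℝ) - 1) * d + 1))) / betaFn ((n₂ - n₁ : ℕ) : ℝ) (n₁ : ℝ) :=
          integral_div _ _
      _ = betaFn ((n₂ - n₁ : ℕ) : ℝ) ((n₁ : ℝ) - k / d) / betaFn ((n₂ - n₁ : ℕ) : ℝ) (n₁ : ℝ) := by
          rw [hGI.2]
end

section
/- (Unbiasedness of the TWO-NN maximum likelihood estimator.) Let d > 0 and let n ≥ 2 be an integer. Let μ₁, …, μ_n be i.i.d. random variables, each following the Pareto(1, d) distribution. Then the estimator d̂ = (n−1)/(Σ_{i=1}^{n} log μ_i) is integrable and satisfies E[d̂] = d. -/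
/-!
Each `log μᵢ` is exponential with rate `d`, so `E[e^{-s log μᵢ}] = d / (d + s)` for `s > 0`.
Writing `1 / S = ∫₀^∞ e^{-sS} ds` for `S = ∑ log μᵢ > 0`, Tonelli and independence give
`E[1 / S] = ∫₀^∞ (d / (d + s))ⁿ ds = d / (n - 1)`.
-/

open MeasureTheory ProbabilityTheory Real Set

lemma ofReal_inv_eq_setLIntegral_exp {x : ℝ} (hx : 0 < x) :
    ENNReal.ofReal x⁻¹ = ∫⁻ s in Ioi 0, ENNReal.ofReal (rexp (-s * x)) := by
  have hcomm : (fun s => rexp (-s * x)) = fun s => rexp (-x * s) := by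
    ext s; ring_nf
  rw [← ofReal_integral_eq_lintegral_ofReal, hcomm, integral_exp_mul_Ioi (by linarith)]
  · simp [neg_div]
  · rw [hcomm]; exact integrableOn_exp_mul_Ioi (by linarith) 0
  · exact ae_of_all _ fun _ => (exp_pos _).le

lemma setLIntegral_div_add_pow_Ioi {d : ℝ} (hd : 0 < d) {n : ℕ} (hn : 1 < n) :
    ∫⁻ s in Ioi 0, ENNReal.ofReal ((d / (d + s)) ^ n) = ENNReal.ofReal (d / (n - 1)) := by
  have hn' : (1 : ℝ) < n := by exact_mod_cast hn
  have hrpow : ∀ s ∈ Ioi (0 : ℝ), ENNReal.ofReal ((d / (d + s)) ^ n)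
      = ENNReal.ofReal (d ^ n * (d + s) ^ (-(n : ℝ))) := fun s (hs : 0 < s) => by
    rw [div_pow, rpow_neg (by linarith), rpow_natCast, div_eq_mul_inv]
  have hshift := (measurePreserving_add_left volume d).setLIntegral_comp_emb
    (MeasurableEquiv.addLeft d).measurableEmbedding
    (fun x => ENNReal.ofReal (d ^ n * x ^ (-(n : ℝ)))) (Ioi 0)
  rw [setLIntegral_congr_fun measurableSet_Ioi hrpow, hshift, image_const_add_Ioi, add_zero,
    ← ofReal_integral_eq_lintegral_ofReal
    ((integrableOn_Ioi_rpow_of_lt (by linarith) hd).const_mul _)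
    ((ae_restrict_iff' measurableSet_Ioi).mpr (ae_of_all _ fun x (hx : d < x) => by
      have : 0 < x := hd.trans hx
      positivity)),
    integral_const_mul, integral_Ioi_rpow_of_lt (by linarith) hd]
  congr 1
  rw [← rpow_natCast, show -(n : ℝ) + 1 = 1 - n by ring, rpow_sub hd, rpow_one]
  field_simp
  rw [← neg_sub (n : ℝ) 1, div_neg, neg_neg]

lemma integrable_and_integral_eq_of_lintegral_ofReal_eq {Ω : Type*} [MeasurableSpace Ω]
    {P : Measure Ω} {f : Ω → ℝ} {a : ℝ} (hf : AEStronglyMeasurable f P) (hf_nonneg : 0 ≤ᵐ[P] f)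
    (ha : 0 ≤ a) (h : ∫⁻ ω, ENNReal.ofReal (f ω) ∂P = ENNReal.ofReal a) :
    Integrable f P ∧ ∫ ω, f ω ∂P = a :=
  ⟨⟨hf, (hasFiniteIntegral_iff_ofReal hf_nonneg).mpr (h ▸ ENNReal.ofReal_lt_top)⟩,
    by rw [integral_eq_lintegral_of_nonneg_ae hf_nonneg hf, h, ENNReal.toReal_ofReal ha]⟩

namespace ProbabilityTheory

lemma ae_lt_paretoMeasure (t r : ℝ) : ∀ᵐ x ∂paretoMeasure t r, t < x := by
  have : paretoMeasure t r (Iic t) = 0 := by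
    rw [paretoMeasure, withDensity_apply _ measurableSet_Iic, ← setLIntegral_congr Iio_ae_eq_Iic]
    exact lintegral_paretoPDF_of_le le_rfl
  rw [ae_iff]
  simp only [not_lt]
  exact this

lemma mgf_log_paretoMeasure {t r s : ℝ} (ht : 0 < t) (hr : 0 ≤ r) (hs : s < r) :
    mgf Real.log (paretoMeasure t r) s = t ^ s * r / (r - s) := by
  have hdensity : ∀ x, (paretoPDF t r x).toReal • rexp (s * Real.log x)
      = (Ici t).indicator (fun x => r * t ^ r * x ^ (s - (r + 1))) x := by
    intro x
    by_cases hx : t ≤ x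
    · have hx0 : 0 < x := ht.trans_le hx
      rw [Set.indicator_of_mem (show x ∈ Ici t from hx), paretoPDF_of_le hx,
        ENNReal.toReal_ofReal (by positivity), smul_eq_mul, mul_comm s, ← rpow_def_of_pos hx0,
        mul_assoc, ← rpow_add hx0]
      ring_nf
    · simp [Set.indicator_of_notMem (show x ∉ Ici t from hx), paretoPDF_of_lt (not_le.mp hx)]
  rw [mgf, paretoMeasure, integral_withDensity_eq_integral_toReal_smul (f := paretoPDF t r)
    (measurable_paretoPDFReal t r).ennreal_ofReal (ae_of_all _ fun _ => ENNReal.ofReal_lt_top)]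
  simp_rw [hdensity]
  rw [integral_indicator measurableSet_Ici, integral_Ici_eq_integral_Ioi, integral_const_mul,
    integral_Ioi_rpow_of_lt (by linarith) ht]
  have hsr : r - s ≠ 0 := by linarith
  rw [show s - (r + 1) + 1 = -(r - s) by ring, rpow_neg ht.le, rpow_sub ht]
  field_simp

lemma lintegral_ofReal_inv_eq_setLIntegral_mgf {Ω : Type*} [MeasurableSpace Ω] {P : Measure Ω}
    [IsFiniteMeasure P] {X : Ω → ℝ} (hX : Measurable X) (hpos : ∀ᵐ ω ∂P, 0 < X ω) :
    ∫⁻ ω, ENNReal.ofReal (X ω)⁻¹ ∂P = ∫⁻ s in Ioi 0, ENNReal.ofReal (mgf X P (-s)) := by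
  have hexp_meas : Measurable fun p : Ω × ℝ => ENNReal.ofReal (rexp (-p.2 * X p.1)) := by
    fun_prop
  calc ∫⁻ ω, ENNReal.ofReal (X ω)⁻¹ ∂P
      = ∫⁻ ω, (∫⁻ s in Ioi 0, ENNReal.ofReal (rexp (-s * X ω))) ∂P :=
        lintegral_congr_ae (hpos.mono fun ω hω => ofReal_inv_eq_setLIntegral_exp hω)
    _ = ∫⁻ s in Ioi 0, ∫⁻ ω, ENNReal.ofReal (rexp (-s * X ω)) ∂P :=
        lintegral_lintegral_swap hexp_meas.aemeasurable
    _ = ∫⁻ s in Ioi 0, ENNReal.ofReal (mgf X P (-s)) := by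
        refine setLIntegral_congr_fun measurableSet_Ioi fun s (hs : 0 < s) => ?_
        have hint : Integrable (fun ω => rexp (-s * X ω)) P := by
          refine .of_mem_Icc 0 1 (by fun_prop) (hpos.mono fun ω hω => ⟨(exp_pos _).le, ?_⟩)
          exact exp_le_one_iff.mpr (by nlinarith)
        exact (ofReal_integral_eq_lintegral_ofReal hint (ae_of_all _ fun _ => (exp_pos _).le)).symm

lemma mgf_sum_log_of_map_eq_paretoMeasure {Ω ι : Type*} [MeasurableSpace Ω] [Fintype ι]
    {P : Measure Ω} {μ : ι → Ω → ℝ} {t r s : ℝ} (hμmeas : ∀ i, Measurable (μ i))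
    (hindep : iIndepFun μ P) (hlaw : ∀ i, P.map (μ i) = paretoMeasure t r)
    (ht : 0 < t) (hr : 0 ≤ r) (hs : s < r) :
    mgf (fun ω => ∑ i, Real.log (μ i ω)) P s = (t ^ s * r / (r - s)) ^ Fintype.card ι := by
  have hlog_mgf : ∀ i, mgf (Real.log ∘ μ i) P s = t ^ s * r / (r - s) := fun i => by
    rw [← mgf_map (hμmeas i).aemeasurable (by fun_prop), hlaw i, mgf_log_paretoMeasure ht hr hs]
  have hsum : (fun ω => ∑ i, Real.log (μ i ω)) = ∑ i, Real.log ∘ μ i := by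
    ext ω; simp
  rw [hsum, (hindep.comp _ fun _ => measurable_log).mgf_sum (fun i => by fun_prop),
    Finset.prod_congr rfl fun i _ => hlog_mgf i, Finset.prod_const, Finset.card_univ]

end ProbabilityTheory

/-- **Unbiasedness of the TWO-NN maximum likelihood estimator.**
Let `d > 0`, `n ≥ 2`, and let `μ 0, …, μ (n-1)` be i.i.d. `Pareto(1, d)` random variables.
Then the estimator `d̂ = (n−1) / (∑ i, log (μ i))` is integrable and `E[d̂] = d`. -/
theorem twoNN_mle_unbiased
    {Ω : Type*} [MeasurableSpace Ω] (P : Measure Ω) [IsProbabilityMeasure P]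
    (d : ℝ) (hd : 0 < d) (n : ℕ) (hn : 2 ≤ n)
    (μ : Fin n → Ω → ℝ) (hμmeas : ∀ i, Measurable (μ i))
    (hindep : iIndepFun μ P)
    (hlaw : ∀ i, Measure.map (μ i) P = paretoMeasure 1 d) :
    Integrable (fun ω => ((n : ℝ) - 1) / ∑ i, Real.log (μ i ω)) P ∧
    ∫ ω, ((n : ℝ) - 1) / ∑ i, Real.log (μ i ω) ∂P = d := by
  set S : Ω → ℝ := fun ω => ∑ i, Real.log (μ i ω)
  have hn1 : (0 : ℝ) < n - 1 := by
    have : (2 : ℝ) ≤ n := by exact_mod_cast hn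
    linarith
  have hS_meas : Measurable S := by fun_prop
  have hS_pos : ∀ᵐ ω ∂P, 0 < S ω := by
    have : ∀ i, ∀ᵐ ω ∂P, 1 < μ i ω := fun i =>
      ae_of_ae_map (hμmeas i).aemeasurable (hlaw i ▸ ae_lt_paretoMeasure 1 d)
    filter_upwards [ae_all_iff.mpr this] with ω hω
    exact Finset.sum_pos (fun i _ => log_pos (hω i)) ⟨⟨0, by omega⟩, Finset.mem_univ _⟩
  have hS_mgf : ∀ s, 0 < s → mgf S P (-s) = (d / (d + s)) ^ n := fun s hs => by
    rw [mgf_sum_log_of_map_eq_paretoMeasure hμmeas hindep hlaw one_pos hd.le (by linarith),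
      one_rpow, one_mul, sub_neg_eq_add, Fintype.card_fin]
  have hlintegral : ∫⁻ ω, ENNReal.ofReal ((n - 1) / S ω) ∂P = ENNReal.ofReal d := by
    calc ∫⁻ ω, ENNReal.ofReal ((n - 1) / S ω) ∂P
        = ENNReal.ofReal (n - 1) * ∫⁻ ω, ENNReal.ofReal (S ω)⁻¹ ∂P := by
          simp_rw [div_eq_mul_inv, ENNReal.ofReal_mul hn1.le]
          exact lintegral_const_mul _ (by fun_prop)
      _ = ENNReal.ofReal (n - 1) * ENNReal.ofReal (d / (n - 1)) := by
          rw [lintegral_ofReal_inv_eq_setLIntegral_mgf hS_meas hS_pos,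
            setLIntegral_congr_fun measurableSet_Ioi fun s hs => by rw [hS_mgf s hs],
            setLIntegral_div_add_pow_Ioi hd (by omega)]
      _ = ENNReal.ofReal d := by
          rw [← ENNReal.ofReal_mul hn1.le, mul_div_cancel₀ _ hn1.ne']
  exact integrable_and_integral_eq_of_lintegral_ofReal_eq
    (measurable_const.div hS_meas).aestronglyMeasurable
    (hS_pos.mono fun ω hω => div_nonneg hn1.le hω.le) hd.le hlintegral
end

section
/- (Mean and variance of the Cride maximum likelihood estimator.) Let d > 0, let n ≥ 1 and L ≥ 2 be integers with n(L−1) > 2. Let (γ_{i,l}) for i = 1,…,n and l = 2,…,L be jointly independent random variables, with γ_{i,l} following the Exponential((l−1)·d) distribution. Define d̂_L = (n(L−1)−1) / (Σ_{i=1}^{n} Σ_{l=2}^{L} (l−1)·γ_{i,l}). Then d̂_L is square-integrable, E[d̂_L] = d, and Var[d̂_L] = d² / (n(L−1) − 2). -/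
/-!
Since `γ (i, j) ~ Exp((j + 1) d)`, every summand `(j + 1) γ (i, j)` of the denominator `S` is
`Exp(d)`, so by independence `E[exp (-t S)] = (d / (d + t)) ^ k` with `k = n (L - 1)`: `S` is
`Gamma(k, d)`. Negative moments are read off this Laplace transform through
`Γ(a) S^(-a) = ∫₀^∞ t^(a-1) exp (-t S) dt` and Tonelli, giving
`E[S⁻¹] = d^k ∫₀^∞ (t + d)^(-k) dt = d / (k - 1)` and
`E[S⁻²] = d^k ∫₀^∞ t (t + d)^(-k) dt = d² / ((k - 1) (k - 2))`.
-/

open MeasureTheory ProbabilityTheory Real Set Filter Topology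

lemma integral_add_rpow_Ioi_zero {a m : ℝ} (ha : a < -1) (hm : 0 < m) :
    ∫ t in Ioi (0 : ℝ), (t + m) ^ a = -m ^ (a + 1) / (a + 1) := by
  have hderiv : ∀ x ∈ Ici (0 : ℝ),
      HasDerivAt (fun t => (t + m) ^ (a + 1) / (a + 1)) ((x + m) ^ a) x := by
    intro x hx
    convert! (((hasDerivAt_id x).add_const m).rpow_const (p := a + 1)
      (Or.inl (by simp only [id]; linarith [mem_Ici.mp hx]))).div_const (a + 1) using 1
    simp [show a + 1 ≠ 0 by linarith]
  have hlim : Tendsto (fun t => (t + m) ^ (a + 1) / (a + 1)) atTop (𝓝 (0 / (a + 1))) := by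
    rw [← neg_neg (a + 1)]
    exact (tendsto_rpow_neg_atTop (by linarith)).comp
      (tendsto_atTop_add_const_right _ m tendsto_id) |>.div_const _
  rw [integral_Ioi_of_hasDerivAt_of_tendsto' hderiv
    (integrableOn_add_rpow_Ioi_of_lt ha (by linarith)) hlim]
  simp [neg_div]

lemma eqOn_mul_add_rpow {a m : ℝ} (hm : 0 < m) :
    EqOn (fun t => t * (t + m) ^ a) (fun t => (t + m) ^ (a + 1) - m * (t + m) ^ a) (Ioi 0) := by
  intro t ht
  simp only [rpow_add (show 0 < t + m by linarith [mem_Ioi.1 ht]), rpow_one]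
  ring

lemma integrableOn_mul_add_rpow_Ioi_zero {a m : ℝ} (ha : a < -2) (hm : 0 < m) :
    IntegrableOn (fun t => t * (t + m) ^ a) (Ioi 0) :=
  (((integrableOn_add_rpow_Ioi_of_lt (by linarith) (by linarith)).sub
    ((integrableOn_add_rpow_Ioi_of_lt (by linarith) (by linarith)).const_mul m)).congr_fun
    (eqOn_mul_add_rpow hm).symm measurableSet_Ioi)

lemma integral_mul_add_rpow_Ioi_zero {a m : ℝ} (ha : a < -2) (hm : 0 < m) :
    ∫ t in Ioi (0 : ℝ), t * (t + m) ^ a = m ^ (a + 2) / ((a + 1) * (a + 2)) := by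
  rw [setIntegral_congr_fun measurableSet_Ioi (eqOn_mul_add_rpow hm), integral_sub
    (integrableOn_add_rpow_Ioi_of_lt (by linarith) (by linarith))
    ((integrableOn_add_rpow_Ioi_of_lt (by linarith) (by linarith)).const_mul m),
    integral_const_mul, integral_add_rpow_Ioi_zero (by linarith) hm,
    integral_add_rpow_Ioi_zero (by linarith) hm, show a + 2 = a + 1 + 1 by ring,
    rpow_add_one hm.ne']
  have : a + 1 ≠ 0 := by linarith
  have : a + 1 + 1 ≠ 0 := by linarith
  field_simp
  ring

lemma lintegral_rpow_mul_exp_neg_mul_Ioi {a s : ℝ} (ha : 0 < a) (hs : 0 < s) :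
    ∫⁻ t in Ioi (0 : ℝ), ENNReal.ofReal (t ^ (a - 1) * exp (-(s * t)))
      = ENNReal.ofReal (Gamma a * s ^ (-a)) := by
  have hval : ∫ t in Ioi (0 : ℝ), t ^ (a - 1) * exp (-(s * t)) = Gamma a * s ^ (-a) := by
    rw [integral_rpow_mul_exp_neg_mul_Ioi ha hs, one_div, inv_rpow hs.le, rpow_neg hs.le, mul_comm]
  have hint : IntegrableOn (fun t => t ^ (a - 1) * exp (-(s * t))) (Ioi 0) :=
    Integrable.of_integral_ne_zero (by rw [hval]; positivity)
  rw [← hval, ofReal_integral_eq_lintegral_ofReal hint]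
  filter_upwards [ae_restrict_mem measurableSet_Ioi] with t ht
  exact mul_nonneg (rpow_nonneg (le_of_lt ht) _) (exp_pos _).le

lemma mgf_id_expMeasure {r u : ℝ} (hr : 0 < r) (hu : u < r) :
    mgf id (expMeasure r) u = r / (r - u) := by
  have hpdf : ∀ x, (exponentialPDF r x).toReal * exp (u * id x)
      = (Ici 0).indicator (fun x => r * exp ((u - r) * x)) x := by
    intro x
    rcases le_or_gt 0 x with hx | hx
    · rw [exponentialPDF_of_nonneg hx, ENNReal.toReal_ofReal (by positivity),
        indicator_of_mem (mem_Ici.2 hx), mul_assoc, ← exp_add, id,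
        show -(r * x) + u * x = (u - r) * x by ring]
    · rw [exponentialPDF_of_neg hx, indicator_of_notMem (by simpa using hx : x ∉ Ici 0)]
      simp
  rw [mgf, expMeasure, gammaMeasure, integral_withDensity_eq_integral_toReal_smul
    (f := gammaPDF 1 r) (measurable_gammaPDFReal 1 r).ennreal_ofReal
    (ae_of_all _ fun _ => ENNReal.ofReal_lt_top)]
  simp_rw [smul_eq_mul]
  change ∫ x, (exponentialPDF r x).toReal * exp (u * id x) = _
  simp_rw [hpdf]
  rw [integral_indicator measurableSet_Ici, integral_Ici_eq_integral_Ioi, integral_const_mul,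
    integral_exp_mul_Ioi (by linarith), mul_zero, exp_zero, neg_div, ← div_neg, neg_sub,
    mul_one_div]

lemma lintegral_rpow_neg_eq_lintegral_mgf {Ω : Type*} [MeasurableSpace Ω] {P : Measure Ω}
    [IsFiniteMeasure P] {S : Ω → ℝ} (hSm : Measurable S) (hS : ∀ᵐ ω ∂P, 0 < S ω) {a : ℝ}
    (ha : 0 < a) :
    ENNReal.ofReal (Gamma a) * ∫⁻ ω, ENNReal.ofReal (S ω ^ (-a)) ∂P
      = ∫⁻ t in Ioi 0, ENNReal.ofReal (t ^ (a - 1) * mgf S P (-t)) := by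
  have hmgf : ∀ t ∈ Ioi (0 : ℝ), ∫⁻ ω, ENNReal.ofReal (t ^ (a - 1) * exp (-(S ω * t))) ∂P
      = ENNReal.ofReal (t ^ (a - 1) * mgf S P (-t)) := by
    intro t ht
    have hint : Integrable (fun ω => t ^ (a - 1) * exp (-t * S ω)) P := by
      refine (Integrable.mono' (integrable_const 1) (by fun_prop) ?_).const_mul _
      filter_upwards [hS] with ω hω
      rw [norm_of_nonneg (exp_pos _).le, exp_le_one_iff]
      nlinarith [mem_Ioi.1 ht]
    rw [mgf, ← integral_const_mul, ofReal_integral_eq_lintegral_ofReal hint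
      (ae_of_all _ fun ω => mul_nonneg (rpow_nonneg (le_of_lt ht) _) (exp_pos _).le)]
    simp_rw [neg_mul, mul_comm t]
  calc ENNReal.ofReal (Gamma a) * ∫⁻ ω, ENNReal.ofReal (S ω ^ (-a)) ∂P
      = ∫⁻ ω, ENNReal.ofReal (Gamma a * S ω ^ (-a)) ∂P := by
        rw [← lintegral_const_mul' _ _ ENNReal.ofReal_ne_top]
        simp_rw [ENNReal.ofReal_mul (Gamma_nonneg_of_nonneg ha.le)]
    _ = ∫⁻ ω, (∫⁻ t in Ioi 0, ENNReal.ofReal (t ^ (a - 1) * exp (-(S ω * t)))) ∂P :=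
        lintegral_congr_ae <| hS.mono fun ω hω => (lintegral_rpow_mul_exp_neg_mul_Ioi ha hω).symm
    _ = ∫⁻ t in Ioi 0, ∫⁻ ω, ENNReal.ofReal (t ^ (a - 1) * exp (-(S ω * t))) ∂P :=
        lintegral_lintegral_swap (by fun_prop)
    _ = ∫⁻ t in Ioi 0, ENNReal.ofReal (t ^ (a - 1) * mgf S P (-t)) :=
        setLIntegral_congr_fun measurableSet_Ioi hmgf

lemma integrable_and_integral_eq_of_lintegral_ofReal_eq_s15 {α : Type*} [MeasurableSpace α]
    {μ : Measure α} {f : α → ℝ} (hf : AEStronglyMeasurable f μ) (h0 : 0 ≤ᵐ[μ] f) {c : ℝ}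
    (hc : 0 ≤ c) (h : ∫⁻ x, ENNReal.ofReal (f x) ∂μ = ENNReal.ofReal c) :
    Integrable f μ ∧ ∫ x, f x ∂μ = c :=
  ⟨⟨hf, (hasFiniteIntegral_iff_ofReal h0).2 (h ▸ ENNReal.ofReal_lt_top)⟩,
    by rw [integral_eq_lintegral_of_nonneg_ae h0 hf, h, ENNReal.toReal_ofReal hc]⟩

section MgfOfGamma

variable {Ω : Type*} [MeasurableSpace Ω] {P : Measure Ω} [IsFiniteMeasure P] {S : Ω → ℝ}
  {d : ℝ} {k : ℕ}

lemma lintegral_rpow_neg_of_mgf_eq (hSm : Measurable S) (hS : ∀ᵐ ω ∂P, 0 < S ω) (hd : 0 < d)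
    (hmgf : ∀ t > 0, mgf S P (-t) = (d / (d + t)) ^ k) {a : ℝ} (ha : 0 < a) :
    ENNReal.ofReal (Gamma a) * ∫⁻ ω, ENNReal.ofReal (S ω ^ (-a)) ∂P
      = ∫⁻ t in Ioi 0, ENNReal.ofReal (d ^ k * (t ^ (a - 1) * (t + d) ^ (-(k : ℝ)))) := by
  rw [lintegral_rpow_neg_eq_lintegral_mgf hSm hS ha]
  refine setLIntegral_congr_fun measurableSet_Ioi fun t ht => ?_
  rw [hmgf t ht, div_pow, rpow_neg (by linarith [mem_Ioi.1 ht]), rpow_natCast, add_comm t]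
  ring_nf

lemma integrable_inv_of_mgf_eq (hSm : Measurable S) (hS : ∀ᵐ ω ∂P, 0 < S ω) (hd : 0 < d)
    (hmgf : ∀ t > 0, mgf S P (-t) = (d / (d + t)) ^ k) (hk : 1 < k) :
    Integrable (fun ω => (S ω)⁻¹) P ∧ ∫ ω, (S ω)⁻¹ ∂P = d / (k - 1) := by
  have hk' : (1 : ℝ) < k := by exact_mod_cast hk
  have key := lintegral_rpow_neg_of_mgf_eq hSm hS hd hmgf one_pos
  simp only [Gamma_one, ENNReal.ofReal_one, one_mul, rpow_neg_one, sub_self, rpow_zero] at key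
  refine integrable_and_integral_eq_of_lintegral_ofReal_eq_s15 (by fun_prop)
    (hS.mono fun ω hω => (inv_pos.2 hω).le) (div_nonneg hd.le (by linarith)) ?_
  rw [key, ← ofReal_integral_eq_lintegral_ofReal
    ((integrableOn_add_rpow_Ioi_of_lt (by linarith) (by linarith)).const_mul _)
    (ae_restrict_of_forall_mem measurableSet_Ioi fun t ht => by
      have := mem_Ioi.1 ht; positivity)]
  congr 1
  rw [integral_const_mul, integral_add_rpow_Ioi_zero (by linarith) hd, mul_div_assoc', mul_neg,
    ← rpow_natCast, ← rpow_add hd, show (k : ℝ) + (-k + 1) = 1 by ring, rpow_one,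
    show -(k : ℝ) + 1 = -(k - 1) by ring, div_neg, neg_div, neg_neg]

lemma integrable_inv_sq_of_mgf_eq (hSm : Measurable S) (hS : ∀ᵐ ω ∂P, 0 < S ω) (hd : 0 < d)
    (hmgf : ∀ t > 0, mgf S P (-t) = (d / (d + t)) ^ k) (hk : 2 < k) :
    Integrable (fun ω => (S ω)⁻¹ ^ 2) P ∧
      ∫ ω, (S ω)⁻¹ ^ 2 ∂P = d ^ 2 / ((k - 1) * (k - 2)) := by
  have hk' : (2 : ℝ) < k := by exact_mod_cast hk
  have key := lintegral_rpow_neg_of_mgf_eq hSm hS hd hmgf two_pos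
  have hS2 : ∀ ω, 0 < S ω → S ω ^ (-2 : ℝ) = (S ω)⁻¹ ^ 2 := fun ω hω => by
    rw [rpow_neg hω.le, rpow_two, inv_pow]
  rw [Gamma_two, ENNReal.ofReal_one, one_mul, lintegral_congr_ae (hS.mono fun ω hω => by
    rw [hS2 ω hω]), show (2 : ℝ) - 1 = 1 by norm_num] at key
  simp only [rpow_one] at key
  refine integrable_and_integral_eq_of_lintegral_ofReal_eq_s15 (by fun_prop)
    (ae_of_all _ fun ω => sq_nonneg _)
    (div_nonneg (sq_nonneg d) (mul_nonneg (by linarith) (by linarith))) ?_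
  rw [key, ← ofReal_integral_eq_lintegral_ofReal
    ((integrableOn_mul_add_rpow_Ioi_zero (by linarith) hd).const_mul _)
    (ae_restrict_of_forall_mem measurableSet_Ioi fun t ht => by
      have := mem_Ioi.1 ht; positivity)]
  congr 1
  rw [integral_const_mul, integral_mul_add_rpow_Ioi_zero (by linarith) hd, mul_div_assoc',
    ← rpow_natCast, ← rpow_add hd, show (k : ℝ) + (-k + 2) = 2 by ring, rpow_two]
  congr 1
  ring

end MgfOfGamma

section WeightedExponentials

variable {Ω : Type*} [MeasurableSpace Ω] {P : Measure Ω}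

lemma ae_pos_of_map_eq_expMeasure {Y : Ω → ℝ} (hY : AEMeasurable Y P) {r : ℝ}
    (hlaw : P.map Y = expMeasure r) : ∀ᵐ ω ∂P, 0 < Y ω := by
  refine ae_of_ae_map hY ?_
  rw [hlaw, expMeasure, gammaMeasure,
    ae_withDensity_iff (f := gammaPDF 1 r) (measurable_gammaPDFReal 1 r).ennreal_ofReal]
  filter_upwards [Measure.ae_ne volume 0] with x hx hpdf
  exact lt_of_le_of_ne (not_lt.1 fun hneg => hpdf (exponentialPDF_of_neg hneg)) hx.symm

lemma mgf_const_mul_neg_of_map_eq_expMeasure {Y : Ω → ℝ} (hY : AEMeasurable Y P) {c d t : ℝ}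
    (hc : 0 < c) (hd : 0 < d) (ht : -d < t) (hlaw : P.map Y = expMeasure (c * d)) :
    mgf (fun ω => c * Y ω) P (-t) = d / (d + t) := by
  rw [mgf_const_mul, ← mgf_id_map hY, hlaw, mgf_id_expMeasure (mul_pos hc hd) (by nlinarith),
    show c * d - c * -t = c * (d + t) by ring, mul_div_mul_left _ _ hc.ne']

variable {ι : Type*} [Fintype ι] {X : ι → Ω → ℝ} {c : ι → ℝ} {d : ℝ}

lemma ae_pos_sum_const_mul_of_map_eq_expMeasure [Nonempty ι] (hXm : ∀ i, Measurable (X i))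
    (hc : ∀ i, 0 < c i) (hlaw : ∀ i, P.map (X i) = expMeasure (c i * d)) :
    ∀ᵐ ω ∂P, 0 < ∑ i, c i * X i ω := by
  filter_upwards [ae_all_iff.2 fun i => ae_pos_of_map_eq_expMeasure (hXm i).aemeasurable (hlaw i)]
    with ω hω
  exact Finset.sum_pos (fun i _ => mul_pos (hc i) (hω i)) Finset.univ_nonempty

lemma mgf_neg_sum_const_mul_of_map_eq_expMeasure (hXm : ∀ i, Measurable (X i))
    (hindep : iIndepFun X P) (hc : ∀ i, 0 < c i) (hd : 0 < d)
    (hlaw : ∀ i, P.map (X i) = expMeasure (c i * d)) {t : ℝ} (ht : -d < t) :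
    mgf (fun ω => ∑ i, c i * X i ω) P (-t) = (d / (d + t)) ^ Fintype.card ι := by
  have hindep' : iIndepFun (fun i ω => c i * X i ω) P :=
    hindep.comp (fun i x => c i * x) fun i => measurable_const_mul (c i)
  have hsum : (fun ω => ∑ i, c i * X i ω) = ∑ i, fun ω => c i * X i ω := by
    ext ω; simp only [Finset.sum_apply]
  rw [hsum, hindep'.mgf_sum (fun i => (hXm i).const_mul (c i)),
    Finset.prod_congr rfl fun i _ => mgf_const_mul_neg_of_map_eq_expMeasure
      (hXm i).aemeasurable (hc i) hd ht (hlaw i), Finset.prod_const, Finset.card_univ]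

end WeightedExponentials

theorem cride_mle_mean_variance_general
    {Ω : Type*} [MeasurableSpace Ω] (P : Measure Ω) [IsProbabilityMeasure P]
    (d : ℝ) (hd : 0 < d) (n L : ℕ) (hnL : 2 < n * (L - 1))
    (γ : Fin n × Fin (L - 1) → Ω → ℝ) (hγmeas : ∀ p, Measurable (γ p))
    (hindep : iIndepFun γ P)
    (hlaw : ∀ p : Fin n × Fin (L - 1),
      Measure.map (γ p) P = expMeasure (((p.2 : ℕ) + 1) * d)) :
    MemLp (fun ω => ((n * (L - 1) : ℕ) - 1 : ℝ) /
        ∑ p : Fin n × Fin (L - 1), ((p.2 : ℕ) + 1 : ℝ) * γ p ω) 2 P ∧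
    ∫ ω, ((n * (L - 1) : ℕ) - 1 : ℝ) /
        ∑ p : Fin n × Fin (L - 1), ((p.2 : ℕ) + 1 : ℝ) * γ p ω ∂P = d ∧
    variance (fun ω => ((n * (L - 1) : ℕ) - 1 : ℝ) /
        ∑ p : Fin n × Fin (L - 1), ((p.2 : ℕ) + 1 : ℝ) * γ p ω) P =
      d ^ 2 / ((n * (L - 1) : ℕ) - 2 : ℝ) := by
  set S : Ω → ℝ := fun ω => ∑ p : Fin n × Fin (L - 1), ((p.2 : ℕ) + 1 : ℝ) * γ p ω
  have hcard : Fintype.card (Fin n × Fin (L - 1)) = n * (L - 1) := by simp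
  have : Nonempty (Fin n × Fin (L - 1)) := Fintype.card_pos_iff.1 (by omega)
  have hweights : ∀ p : Fin n × Fin (L - 1), (0 : ℝ) < (p.2 : ℕ) + 1 := fun p => by positivity
  have hSm : Measurable S := Finset.measurable_sum _ fun p _ => (hγmeas p).const_mul _
  have hSpos : ∀ᵐ ω ∂P, 0 < S ω := ae_pos_sum_const_mul_of_map_eq_expMeasure hγmeas hweights hlaw
  have hmgf : ∀ t > 0, mgf S P (-t) = (d / (d + t)) ^ (n * (L - 1)) := fun t ht => by
    rw [← hcard]
    exact mgf_neg_sum_const_mul_of_map_eq_expMeasure hγmeas hindep hweights hd hlaw (by linarith)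
  have hmean := (integrable_inv_of_mgf_eq hSm hSpos hd hmgf (by omega)).2
  obtain ⟨hsq_int, hsecond⟩ := integrable_inv_sq_of_mgf_eq hSm hSpos hd hmgf hnL
  have hc : (2 : ℝ) < (n * (L - 1) : ℕ) := by exact_mod_cast hnL
  set c : ℝ := ((n * (L - 1) : ℕ) : ℝ)
  have : c - 1 ≠ 0 := by linarith
  have : c - 2 ≠ 0 := by linarith
  simp_rw [div_eq_mul_inv]
  have hmem : MemLp (fun ω => (c - 1) * (S ω)⁻¹) 2 P := by
    refine (memLp_two_iff_integrable_sq (by fun_prop)).2 ?_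
    simpa only [mul_pow] using hsq_int.const_mul ((c - 1) ^ 2)
  refine ⟨hmem, ?_, ?_⟩
  · rw [integral_const_mul, hmean]
    field_simp
  · rw [variance_eq_sub hmem]
    simp only [Pi.pow_apply, mul_pow]
    rw [integral_const_mul, hsecond, integral_const_mul, hmean]
    field_simp
    ring

/-- **Mean and variance of the Cride maximum likelihood estimator.**
Let `d > 0`, `n ≥ 1`, `L ≥ 2` with `n(L−1) > 2`. Let `γ (i, j)` for `i : Fin n`,
`j : Fin (L-1)` (encoding the pair `(i, l)` with `l = j + 2 ∈ {2, …, L}`, so that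
`l − 1 = j + 1`) be jointly independent random variables with
`γ (i, j) ~ Exponential((j+1)·d)`. Define
`d̂_L = (n(L−1) − 1) / (∑ i ∑ j (j+1)·γ (i, j))`. Then `d̂_L` is square-integrable,
`E[d̂_L] = d`, and `Var[d̂_L] = d² / (n(L−1) − 2)`. -/
theorem cride_mle_mean_variance
    {Ω : Type*} [MeasurableSpace Ω] (P : Measure Ω) [IsProbabilityMeasure P]
    (d : ℝ) (hd : 0 < d) (n L : ℕ) (hn : 1 ≤ n) (hL : 2 ≤ L) (hnL : 2 < n * (L - 1))
    (γ : Fin n × Fin (L - 1) → Ω → ℝ) (hγmeas : ∀ p, Measurable (γ p))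
    (hindep : iIndepFun γ P)
    (hlaw : ∀ p : Fin n × Fin (L - 1),
      Measure.map (γ p) P = expMeasure (((p.2 : ℕ) + 1) * d)) :
    MemLp (fun ω => ((n * (L - 1) : ℕ) - 1 : ℝ) /
        ∑ p : Fin n × Fin (L - 1), ((p.2 : ℕ) + 1 : ℝ) * γ p ω) 2 P ∧
    ∫ ω, ((n * (L - 1) : ℕ) - 1 : ℝ) /
        ∑ p : Fin n × Fin (L - 1), ((p.2 : ℕ) + 1 : ℝ) * γ p ω ∂P = d ∧
    variance (fun ω => ((n * (L - 1) : ℕ) - 1 : ℝ) /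
        ∑ p : Fin n × Fin (L - 1), ((p.2 : ℕ) + 1 : ℝ) * γ p ω) P =
      d ^ 2 / ((n * (L - 1) : ℕ) - 2 : ℝ) :=
  cride_mle_mean_variance_general P d hd n L hnL γ hγmeas hindep hlaw
end
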